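/- arXiv:1309.3441 — 8 statements merged into one kernel-verified Lean document; each statement's English description precedes it below -/
import Mathlib

section
/- For every N > 0 and every k ≥ 1, there exists a word w of length N over an alphabet A_k with k letters whose subword complexity satisfies p_w(n) = min{k^n, N−n+1} for all n with 1 ≤ n ≤ N. Such a word is called a de Bruijn word. -/
/-!
Let `m` be largest with `k ^ m + m ≤ N + 1`. A word of length `N` containing every word of
length `m` and whose factors of length `m + 1` are pairwise distinct has the required complexity:
it has all `k ^ n` factors of length `n ≤ m`, and `N - n + 1` distinct factors of length `n > m`.
For `k = 1` the word `a ^ N` does it. For `k ≥ 2` such a word is a trail with `N - m` edges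
through every vertex of the de Bruijn graph of order `m`. Starting from a Hamiltonian cycle
(a de Bruijn cycle of order `m`), rotate the current closed trail to start at a vertex with an
unused outgoing edge and extend it greedily along unused edges. As in- and out-degrees are all
`k`, the extension gets stuck only back at its start, which gives a longer closed trail; its
prefixes that contain the old trail realise all intermediate lengths. The process ends with an
Eulerian circuit, i.e. a de Bruijn cycle of order `m + 1`.
-/

/-- The subword complexity of a finite word `w`: the number of distinct
subwords (contiguous factors) of `w` of length `n`. -/
noncomputable def complexity {A : Type*} (w : List A) (n : ℕ) : ℕ :=
  Set.ncard {u : List A | u.length = n ∧ u <:+: w}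

open List

namespace DeBruijn

variable {A : Type*}

section Windows

def window (w : List A) (i n : ℕ) : List A := (w.drop i).take n

theorem length_window {w : List A} {i n : ℕ} (h : i + n ≤ w.length) :
    (window w i n).length = n := by
  simp only [window, length_take, length_drop]
  omega

theorem window_infix (w : List A) (i n : ℕ) : window w i n <:+: w :=
  (take_prefix n _).isInfix.trans (drop_suffix i w).isInfix

theorem exists_window_eq_of_infix {u w : List A} (h : u <:+: w) :
    ∃ i, i + u.length ≤ w.length ∧ window w i u.length = u := by
  obtain ⟨s, t, rfl⟩ := h
  exact ⟨s.length, by simp, by simp [window]⟩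

theorem window_take {w : List A} {s i n : ℕ} (h : i + n ≤ s) :
    window (w.take s) i n = window w i n := by
  simp only [window, drop_take, take_take]
  congr 1
  omega

theorem take_window (w : List A) (i : ℕ) {j n : ℕ} (h : j ≤ n) :
    (window w i n).take j = window w i j := by
  simp [window, take_take, Nat.min_eq_left h]

theorem window_succ {w : List A} {i : ℕ} (n : ℕ) (h : i < w.length) :
    window w i (n + 1) = w[i] :: window w (i + 1) n := by
  rw [window, window, drop_eq_getElem_cons h, take_succ_cons]

theorem window_length_sub (w : List A) (m : ℕ) : window w (w.length - m) m = w.rtake m := by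
  rw [window, rtake, take_of_length_le]
  simp only [length_drop]
  omega

theorem length_rtake_of_le {w : List A} {m : ℕ} (h : m ≤ w.length) :
    (w.rtake m).length = m := by
  simp only [rtake, length_drop]
  omega

theorem window_append_singleton_of_le {w : List A} {a : A} {i n : ℕ} (h : i + n ≤ w.length) :
    window (w ++ [a]) i n = window w i n := by
  rw [← window_take (w := w ++ [a]) h, take_left' rfl]

end Windows

def Distinct (n : ℕ) (w : List A) : Prop :=
  Set.InjOn (window w · n) {i | i + n ≤ w.length}

def Covers (m : ℕ) (w : List A) : Prop :=
  ∀ u : List A, u.length = m → u <:+: w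

section Distinct

variable {m n : ℕ} {w : List A}

theorem Distinct.mono {n' : ℕ} (hd : Distinct n w) (h : n ≤ n') : Distinct n' w := by
  intro i hi j hj he
  refine hd (show i + n ≤ w.length by simp at hi; omega)
    (show j + n ≤ w.length by simp at hj; omega) ?_
  simpa only [take_window _ _ h] using congrArg (take n) he

theorem Distinct.take (hd : Distinct n w) (s : ℕ) : Distinct n (w.take s) := by
  intro i hi j hj he
  simp only [Set.mem_ofPred_eq, length_take] at hi hj
  refine hd (show i + n ≤ w.length by omega) (show j + n ≤ w.length by omega) ?_
  simpa only [window_take (show i + n ≤ s by omega), window_take (show j + n ≤ s by omega)]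
    using he

theorem Distinct.succ_of_dropLast (hd : Distinct n w.dropLast) : Distinct (n + 1) w := by
  intro i hi j hj he
  simp only [Set.mem_ofPred_eq] at hi hj
  refine hd (show i + n ≤ w.dropLast.length by simp; omega)
    (show j + n ≤ w.dropLast.length by simp; omega) ?_
  simpa only [dropLast_eq_take, window_take (show i + n ≤ w.length - 1 by omega),
    window_take (show j + n ≤ w.length - 1 by omega), take_window _ _ (Nat.le_succ n)]
    using congrArg (List.take n) he

theorem Distinct.append_singleton {a : A} (hd : Distinct (m + 1) w) (hm : m ≤ w.length)
    (ha : ¬ w.rtake m ++ [a] <:+: w) : Distinct (m + 1) (w ++ [a]) := by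
  have hlast : window (w ++ [a]) (w.length - m) (m + 1) = w.rtake m ++ [a] := by
    rw [← rtake_concat_succ, ← window_length_sub, length_append, length_singleton]
    congr 1
    omega
  have hnew : ∀ i, i + (m + 1) ≤ w.length →
      window (w ++ [a]) i (m + 1) ≠ window (w ++ [a]) (w.length - m) (m + 1) := by
    intro i hi he
    rw [hlast, window_append_singleton_of_le hi] at he
    exact ha (he ▸ window_infix w i (m + 1))
  intro i hi j hj he
  dsimp only at he
  simp only [Set.mem_ofPred_eq, length_append, length_singleton] at hi hj
  rcases Nat.lt_or_ge (w.length) (i + (m + 1)) with hi' | hi' <;>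
    rcases Nat.lt_or_ge (w.length) (j + (m + 1)) with hj' | hj'
  · omega
  · exact absurd ((show i = w.length - m by omega) ▸ he).symm (hnew j hj')
  · exact absurd ((show j = w.length - m by omega) ▸ he) (hnew i hi')
  · rw [window_append_singleton_of_le hi', window_append_singleton_of_le hj'] at he
    exact hd hi' hj' he

end Distinct

section Covers

variable {m n : ℕ} {w w' : List A}

theorem Covers.of_infix (hc : Covers m w) (h : w <:+: w') : Covers m w' :=
  fun u hu => (hc u hu).trans h

theorem Covers.of_le [Nonempty A] (hc : Covers m w) (hn : n ≤ m) : Covers n w := by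
  intro u hu
  let a : A := Classical.arbitrary A
  exact (prefix_append u (replicate (m - n) a)).isInfix.trans (hc _ (by simp; omega))

end Covers

section Factors

variable [DecidableEq A] {n : ℕ} {w : List A}

def factors (w : List A) (n : ℕ) : Finset (List A) :=
  (Finset.range (w.length + 1 - n)).image (window w · n)

theorem mem_factors {u : List A} : u ∈ factors w n ↔ u.length = n ∧ u <:+: w := by
  simp only [factors, Finset.mem_image, Finset.mem_range]
  constructor
  · rintro ⟨i, hi, rfl⟩
    exact ⟨length_window (by omega), window_infix w i n⟩
  · rintro ⟨rfl, hu⟩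
    obtain ⟨i, hi, he⟩ := exists_window_eq_of_infix hu
    exact ⟨i, by omega, he⟩

theorem complexity_eq_card_factors (w : List A) (n : ℕ) :
    complexity w n = (factors w n).card := by
  rw [complexity, ← Set.ncard_coe_finset]
  congr 1
  ext u
  simp [mem_factors]

theorem card_factors_le : (factors w n).card ≤ w.length + 1 - n :=
  Finset.card_image_le.trans (Finset.card_range _).le

theorem distinct_iff_card_factors : Distinct n w ↔ (factors w n).card = w.length + 1 - n := by
  have hpos : {i | i + n ≤ w.length} = ↑(Finset.range (w.length + 1 - n)) := by
    ext i
    simp only [Set.mem_ofPred_eq, Finset.coe_range, Set.mem_Iio]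
    omega
  rw [Distinct, hpos, ← Finset.card_image_iff, Finset.card_range, factors]

end Factors

section Words

variable [Fintype A] [DecidableEq A] {n : ℕ} {w : List A}

def words (A : Type*) [Fintype A] [DecidableEq A] (n : ℕ) : Finset (List A) :=
  Finset.univ.image (List.Vector.toList : List.Vector A n → List A)

theorem mem_words {u : List A} : u ∈ words A n ↔ u.length = n := by
  simp only [words, Finset.mem_image, Finset.mem_univ, true_and]
  exact ⟨fun ⟨v, hv⟩ => hv ▸ v.toList_length, fun h => ⟨⟨u, h⟩, rfl⟩⟩

theorem card_words : (words A n).card = Fintype.card A ^ n := by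
  rw [words, Finset.card_image_of_injective _ List.Vector.toList_injective, Finset.card_univ,
    card_vector]

theorem factors_subset_words : factors w n ⊆ words A n :=
  fun _ hu => mem_words.2 (mem_factors.1 hu).1

theorem covers_iff_factors_eq_words : Covers n w ↔ factors w n = words A n := by
  refine ⟨fun hc => Finset.Subset.antisymm factors_subset_words fun u hu => ?_,
    fun h u hu => ?_⟩
  · exact mem_factors.2 ⟨mem_words.1 hu, hc u (mem_words.1 hu)⟩
  · exact (mem_factors.1 (h ▸ mem_words.2 hu)).2

end Words

section Counting

variable [Fintype A] {n : ℕ} {w : List A}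

theorem Distinct.length_le (hd : Distinct n w) : w.length + 1 - n ≤ Fintype.card A ^ n := by
  classical
  rw [← distinct_iff_card_factors.1 hd, ← card_words]
  exact Finset.card_le_card factors_subset_words

theorem Distinct.covers (hd : Distinct n w) (h : Fintype.card A ^ n ≤ w.length + 1 - n) :
    Covers n w := by
  classical
  rw [covers_iff_factors_eq_words]
  refine Finset.eq_of_subset_of_card_le factors_subset_words ?_
  rw [card_words, distinct_iff_card_factors.1 hd]
  exact h

theorem not_covers_of_lt (h : w.length + 1 - n < Fintype.card A ^ n) : ¬ Covers n w := by
  classical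
  rw [covers_iff_factors_eq_words]
  intro he
  have := he ▸ (card_factors_le (w := w) (n := n))
  rw [card_words] at this
  omega

end Counting

theorem complexity_eq_pow_of_covers [Fintype A] [Nonempty A] {m n : ℕ} {w : List A}
    (hc : Covers m w) (hn : n ≤ m) : complexity w n = Fintype.card A ^ n := by
  classical
  rw [complexity_eq_card_factors, covers_iff_factors_eq_words.1 (hc.of_le hn), card_words]

theorem complexity_eq_of_distinct {n : ℕ} {w : List A} (hd : Distinct n w) :
    complexity w n = w.length + 1 - n := by
  classical
  rw [complexity_eq_card_factors, distinct_iff_card_factors.1 hd]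

section Occurrences

variable [DecidableEq A] {v w : List A}

def occurrences (v w : List A) : Finset ℕ :=
  (Finset.range (w.length + 1 - v.length)).filter (fun i => window w i v.length = v)

theorem mem_occurrences {i : ℕ} :
    i ∈ occurrences v w ↔ i + v.length ≤ w.length ∧ window w i v.length = v := by
  simp only [occurrences, Finset.mem_filter, Finset.mem_range]
  exact and_congr_left' ⟨fun _ => by omega, fun _ => by omega⟩

theorem card_lt_card_occurrences [Fintype A] (hv : v <:+ w) (h : ∀ a, v ++ [a] <:+: w) :
    Fintype.card A < (occurrences v w).card := by
  have hlast : w.length - v.length ∈ occurrences v w := by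
    refine mem_occurrences.2 ⟨by have := hv.length_le; omega, ?_⟩
    rw [window_length_sub, rtake, ← suffix_iff_eq_drop.1 hv]
  have hpos : ∀ a, ∃ i, i + (v.length + 1) ≤ w.length ∧
      window w i (v.length + 1) = v ++ [a] :=
    fun a => by simpa using exists_window_eq_of_infix (h a)
  choose pos hpos hwin using hpos
  have hmaps : ∀ a, pos a ∈ (occurrences v w).erase (w.length - v.length) := fun a => by
    have := congrArg (take v.length) (hwin a)
    rw [take_window _ _ (Nat.le_succ _), take_left' rfl] at this
    have := hpos a
    exact Finset.mem_erase.2 ⟨by omega, mem_occurrences.2 ⟨by omega, by assumption⟩⟩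
  have := Finset.card_le_card_of_injOn (s := Finset.univ) pos (fun a _ => hmaps a)
    fun a _ b _ hab => singleton_inj.1 (append_cancel_left ((hwin a).symm.trans (hab ▸ hwin b)))
  rw [Finset.card_erase_of_mem hlast, Finset.card_univ] at this
  have := Finset.card_pos.2 ⟨_, hlast⟩
  omega

theorem card_occurrences_le [Fintype A] (hd : Distinct (v.length + 1) w) (hv : ¬ v <+: w) :
    (occurrences v w).card ≤ Fintype.card A := by
  have hstart : ∀ i ∈ occurrences v w, 1 ≤ i := by
    intro i hi
    refine Nat.one_le_iff_ne_zero.2 fun h0 => hv ?_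
    rw [mem_occurrences, h0] at hi
    exact prefix_iff_eq_take.2 (by simpa [window] using hi.2.symm)
  calc (occurrences v w).card ≤ (Finset.univ.image (· :: v)).card := by
        refine Finset.card_le_card_of_injOn (fun i => window w (i - 1) (v.length + 1)) ?_ ?_
        · intro i hi
          have h1 := hstart i hi
          rw [Finset.mem_coe, mem_occurrences] at hi
          simp only [Finset.mem_coe]
          rw [window_succ _ (by omega), Nat.sub_add_cancel h1, hi.2]
          exact Finset.mem_image_of_mem _ (Finset.mem_univ _)
        · intro i hi j hj hij
          have := hstart i hi
          have := hstart j hj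
          rw [Finset.mem_coe, mem_occurrences] at hi hj
          have := hd (show i - 1 + (v.length + 1) ≤ w.length by omega)
            (show j - 1 + (v.length + 1) ≤ w.length by omega) hij
          omega
    _ ≤ Fintype.card A := Finset.card_image_le

end Occurrences

section Extension

variable {m : ℕ} {w : List A}

/-- A greedy walk in the de Bruijn graph, all of whose vertices have in-degree `k`, can only get
stuck at its starting vertex. -/
theorem take_eq_rtake_of_forall_append_infix [Fintype A] (hd : Distinct (m + 1) w)
    (hm : m < w.length) (h : ∀ a, w.rtake m ++ [a] <:+: w) : w.take m = w.rtake m := by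
  classical
  set v := w.rtake m
  have hv : v.length = m := length_rtake_of_le hm.le
  by_contra hne
  have hprefix : ¬ v <+: w := fun hp => hne (by rw [prefix_iff_eq_take.1 hp, hv])
  have := card_lt_card_occurrences (show v <:+ w from drop_suffix _ w) h
  have := card_occurrences_le (by rwa [hv]) hprefix
  omega

theorem exists_prefix_forall_append_infix [Fintype A] (hd : Distinct (m + 1) w)
    (hm : m ≤ w.length) :
    ∃ w', w <+: w' ∧ Distinct (m + 1) w' ∧ ∀ a, w'.rtake m ++ [a] <:+: w' := by
  induction hfuel : Fintype.card A ^ (m + 1) + m - w.length using Nat.strong_induction_on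
    generalizing w with
  | _ fuel ih =>
  by_cases hstuck : ∀ a, w.rtake m ++ [a] <:+: w
  · exact ⟨w, prefix_refl w, hd, hstuck⟩
  obtain ⟨a, ha⟩ := not_forall.1 hstuck
  have hlt : w.length < Fintype.card A ^ (m + 1) + m := by
    by_contra! hge
    exact ha (hd.covers (by omega) _ (by simp [length_rtake_of_le hm]))
  obtain ⟨w', hw', hd', hstuck'⟩ :=
    ih _ (by simp at hfuel ⊢; omega) (hd.append_singleton hm ha) (by simp; omega) rfl
  exact ⟨w', (prefix_append w [a]).trans hw', hd', hstuck'⟩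

end Extension

section Cyclic

variable {m : ℕ} {c d x : List A}

def wrap (m : ℕ) (c : List A) : List A := c ++ c.take m

theorem length_wrap (h : m ≤ c.length) : (wrap m c).length = c.length + m := by
  simp only [wrap, length_append, length_take]
  omega

theorem rtake_wrap (h : m ≤ c.length) : (wrap m c).rtake m = c.take m := by
  rw [rtake, length_wrap h, Nat.add_sub_cancel, wrap, drop_left]

theorem wrap_take_of_take_eq_rtake {w : List A} (h : w.take m = w.rtake m)
    (hm : 2 * m ≤ w.length) : wrap m (w.take (w.length - m)) = w := by
  rw [wrap, take_take, Nat.min_eq_left (by omega), h, rtake, take_append_drop]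

theorem infix_wrap_iff (hx : x.length ≤ m + 1) : x <:+: wrap m c ↔ x <:+: c ++ c := by
  refine ⟨fun h => h.trans ((prefix_append_right_inj c).2 (take_prefix m c)).isInfix,
    fun h => ?_⟩
  rcases infix_append_iff_ne_nil.1 h with h | h | ⟨l₁, l₂, h₁, -, rfl, hs, hp⟩
  · exact h.trans (prefix_append c _).isInfix
  · exact h.trans (prefix_append c _).isInfix
  · refine infix_append_iff.2 <| Or.inr <| Or.inr
      ⟨l₁, l₂, rfl, hs, prefix_take_iff.2 ⟨hp, ?_⟩⟩
    have := length_pos_of_ne_nil h₁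
    simp only [length_append] at hx
    omega

theorem infix_append_self_iff (hx : x.length ≤ c.length) :
    x <:+: c ++ c ↔ ∃ d, c ~r d ∧ x <+: d := by
  constructor
  · intro h
    rcases infix_append_iff.1 h with
      ⟨s, t, rfl⟩ | ⟨s, t, rfl⟩ | ⟨l₁, l₂, rfl, ⟨s, rfl⟩, hp⟩
    · exact ⟨x ++ t ++ s, by simpa using isRotated_append (l := s) (l' := x ++ t), by simp⟩
    · exact ⟨x ++ t ++ s, by simpa using isRotated_append (l := s) (l' := x ++ t), by simp⟩
    · refine ⟨l₁ ++ s, isRotated_append, (prefix_append_right_inj l₁).2 ?_⟩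
      simp only [length_append] at hx
      exact prefix_of_prefix_length_le hp (prefix_append s l₁) (by omega)
  · rintro ⟨d, hcd, hxd⟩
    obtain ⟨n, hn, rfl⟩ := isRotated_iff_mod.1 hcd
    rw [rotate_eq_drop_append_take hn] at hxd
    refine hxd.isInfix.trans ⟨c.take n, c.drop n, ?_⟩
    simp only [append_assoc, take_append_drop]
    rw [← append_assoc, take_append_drop]

theorem infix_wrap_iff_of_isRotated (h : c ~r d) (hx : x.length ≤ m + 1) (hm : m < c.length) :
    x <:+: wrap m c ↔ x <:+: wrap m d := by
  have hlen : c.length = d.length := h.perm.length_eq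
  rw [infix_wrap_iff hx, infix_wrap_iff hx, infix_append_self_iff (by omega),
    infix_append_self_iff (by omega)]
  exact ⟨fun ⟨e, hce, hxe⟩ => ⟨e, h.symm.trans hce, hxe⟩,
    fun ⟨e, hde, hxe⟩ => ⟨e, h.trans hde, hxe⟩⟩

end Cyclic

section ClosedTrail

variable {m : ℕ} {c d : List A}

/-- In the de Bruijn graph of order `m`, whose vertices are the words of length `m` and whose
edges are those of length `m + 1`, the cyclic word `c`, read linearly as `wrap m c`, is a closed
trail through every vertex. -/
def ClosedTrail (m : ℕ) (c : List A) : Prop :=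
  m < c.length ∧ Covers m (wrap m c) ∧ Distinct (m + 1) (wrap m c)

theorem ClosedTrail.isRotated (hc : ClosedTrail m c) (h : c ~r d) : ClosedTrail m d := by
  classical
  obtain ⟨hm, hcov, hd⟩ := hc
  have hlen : d.length = c.length := h.perm.length_eq.symm
  have hfac : factors (wrap m d) (m + 1) = factors (wrap m c) (m + 1) := by
    ext x
    simp only [mem_factors]
    exact and_congr_right fun hx => (infix_wrap_iff_of_isRotated h hx.le hm).symm
  refine ⟨hlen ▸ hm, fun u hu => (infix_wrap_iff_of_isRotated h (by omega) hm).1 (hcov u hu),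
    ?_⟩
  rw [distinct_iff_card_factors] at hd ⊢
  rw [hfac, hd, length_wrap (by omega), length_wrap (by omega), hlen]

theorem ClosedTrail.exists_isRotated_take_eq (hc : ClosedTrail m c) {u : List A}
    (hu : u.length = m) : ∃ d, c ~r d ∧ d.take m = u := by
  obtain ⟨d, hcd, hud⟩ := (infix_append_self_iff (hu ▸ hc.1.le)).1
    ((infix_wrap_iff (by omega)).1 (hc.2.1 u hu))
  exact ⟨d, hcd, by rw [prefix_iff_eq_take.1 hud, hu]⟩

theorem ClosedTrail.covers_take (hc : ClosedTrail m c) :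
    Covers m ((wrap m c).take (c.length - 1 + m)) := by
  intro u hu
  obtain ⟨i, hi, hwin⟩ := exists_window_eq_of_infix (hc.2.1 u hu)
  rw [hu, length_wrap hc.1.le] at hi
  rw [hu] at hwin
  have hperiod : window (wrap m c) c.length m = window (wrap m c) 0 m := by
    rw [window, window, wrap, drop_left, drop_zero, take_take, min_self,
      take_append_of_le_length hc.1.le]
  rcases (show i ≤ c.length - 1 ∨ i = c.length by omega) with hi' | rfl
  · rw [← hwin, ← window_take (s := c.length - 1 + m) (by omega)]
    exact window_infix _ _ _
  · rw [← hwin, hperiod, ← window_take (s := c.length - 1 + m) (by omega)]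
    exact window_infix _ _ _

theorem ClosedTrail.length_le [Fintype A] (hc : ClosedTrail m c) :
    c.length ≤ Fintype.card A ^ (m + 1) := by
  have := hc.2.2.length_le
  rw [length_wrap hc.1.le] at this
  omega

theorem ClosedTrail.exists_longer [Fintype A] (hc : ClosedTrail m c)
    (hlt : c.length < Fintype.card A ^ (m + 1)) :
    ∃ c' : List A, ClosedTrail m c' ∧ c.length < c'.length ∧
      Covers m ((wrap m c').take (c.length + m)) := by
  obtain ⟨z, hz, hzc⟩ : ∃ z : List A, z.length = m + 1 ∧ ¬ z <:+: wrap m c := by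
    have := not_covers_of_lt (w := wrap m c) (n := m + 1) (by rw [length_wrap hc.1.le]; omega)
    simpa [Covers] using this
  obtain ⟨u, a, rfl⟩ : ∃ u a, z = u ++ [a] := by
    rcases eq_nil_or_concat z with rfl | ⟨u, a, rfl⟩
    · simp at hz
    · exact ⟨u, a, by simp⟩
  have hu : u.length = m := by simpa using hz
  -- rotate the trail to start, hence end, at the vertex `u`, which has the unused edge `u ++ [a]`
  obtain ⟨d, hcd, hdu⟩ := hc.exists_isRotated_take_eq hu
  have hd : ClosedTrail m d := hc.isRotated hcd
  have hdlen : d.length = c.length := hcd.perm.length_eq.symm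
  have hzd : ¬ u ++ [a] <:+: wrap m d := fun h =>
    hzc ((infix_wrap_iff_of_isRotated hcd (by simp [hu]) hc.1).2 h)
  obtain ⟨w, hpre, hdw, hstuck⟩ :=
    exists_prefix_forall_append_infix hd.2.2 (by rw [length_wrap hd.1.le]; omega)
  have hlong : (wrap m d).length < w.length := by
    refine lt_of_le_of_ne hpre.length_le fun heq => hzd ?_
    have := hstuck a
    rwa [← hpre.eq_of_length heq, rtake_wrap hd.1.le, hdu] at this
  rw [length_wrap hd.1.le] at hlong
  have := hd.1
  have hw := wrap_take_of_take_eq_rtake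
    (take_eq_rtake_of_forall_append_infix hdw (by omega) hstuck) (by omega)
  refine ⟨w.take (w.length - m), ⟨by simp; omega, ?_, ?_⟩, by simp; omega, ?_⟩
  · rw [hw]
    exact hd.2.1.of_infix hpre.isInfix
  · rwa [hw]
  · rw [hw, ← hdlen, ← length_wrap hd.1.le, ← prefix_iff_eq_take.1 hpre]
    exact hd.2.1

theorem ClosedTrail.exists_covers_distinct_of_covers_take {c : List A} {s E : ℕ}
    (hc : ClosedTrail m c) (hs : Covers m ((wrap m c).take s)) (hsE : s ≤ m + E)
    (hE : E ≤ c.length) :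
    ∃ w : List A, w.length = m + E ∧ Covers m w ∧ Distinct (m + 1) w := by
  refine ⟨(wrap m c).take (m + E), ?_, hs.of_infix (take_prefix_take_left hsE).isInfix,
    hc.2.2.take _⟩
  rw [length_take, length_wrap hc.1.le]
  omega

end ClosedTrail

section Construction

variable [Fintype A] {m : ℕ}

theorem ClosedTrail.exists_covers_distinct {c : List A} {E : ℕ} (hc : ClosedTrail m c)
    (hE : c.length - 1 ≤ E) (hE' : E ≤ Fintype.card A ^ (m + 1)) :
    ∃ w : List A, w.length = m + E ∧ Covers m w ∧ Distinct (m + 1) w := by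
  induction hfuel : Fintype.card A ^ (m + 1) - c.length using Nat.strong_induction_on
    generalizing c with
  | _ fuel ih =>
  by_cases hEc : E ≤ c.length
  · exact hc.exists_covers_distinct_of_covers_take hc.covers_take (by omega) hEc
  obtain ⟨c', hc', hlt, hcov⟩ := hc.exists_longer (by omega)
  by_cases hEc' : E ≤ c'.length
  · exact hc'.exists_covers_distinct_of_covers_take hcov (by omega) hEc'
  exact ih _ (by have := hc'.length_le; omega) hc' (by omega) rfl

theorem closedTrail_take_of_distinct {w : List A} (hd : Distinct (m + 1) w)
    (hw : w.length = Fintype.card A ^ (m + 1) + m) (hm : m + 1 < Fintype.card A ^ (m + 1)) :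
    ClosedTrail (m + 1) (w.take (Fintype.card A ^ (m + 1))) := by
  set c := w.take (Fintype.card A ^ (m + 1))
  have hc : c.length = Fintype.card A ^ (m + 1) := by simp [c]; omega
  have hcov : Covers (m + 1) w := hd.covers (by omega)
  have hwrap : wrap m c = w := by
    have := wrap_take_of_take_eq_rtake (take_eq_rtake_of_forall_append_infix hd (by omega)
      fun a => hcov _ (by simp [length_rtake_of_le (show m ≤ w.length by omega)])) (by omega)
    rwa [hw, Nat.add_sub_cancel] at this
  have hdropLast : (wrap (m + 1) c).dropLast = w := by
    rw [← hwrap, wrap, wrap, dropLast_append_of_ne_nil (ne_nil_of_length_pos (by simp; omega)),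
      dropLast_take (by omega), Nat.add_sub_cancel]
  refine ⟨hc ▸ hm, hcov.of_infix (hdropLast ▸ (dropLast_prefix _).isInfix), ?_⟩
  exact Distinct.succ_of_dropLast (hdropLast ▸ hd)

theorem exists_closedTrail (hk : 2 ≤ Fintype.card A) (m : ℕ) :
    ∃ c : List A, c.length = Fintype.card A ^ m ∧ ClosedTrail m c := by
  induction m with
  | zero =>
    obtain ⟨a⟩ : Nonempty A := Fintype.card_pos_iff.1 (by omega)
    refine ⟨[a], rfl, by simp, fun u hu => by simp [length_eq_zero_iff.1 hu], ?_⟩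
    intro i hi j hj _
    simp only [wrap, take_zero, append_nil, length_singleton, Set.mem_ofPred_eq] at hi hj
    omega
  | succ m ih =>
    obtain ⟨c, hc, htrail⟩ := ih
    have := Nat.pow_le_pow_right (n := Fintype.card A) (by omega) (show m ≤ m + 1 by omega)
    obtain ⟨w, hw, -, hd⟩ :=
      htrail.exists_covers_distinct (E := Fintype.card A ^ (m + 1)) (by omega) le_rfl
    exact ⟨_, by simp; omega, closedTrail_take_of_distinct hd (by omega) (Nat.lt_pow_self hk)⟩

theorem exists_covers_distinct [Nonempty A] {N : ℕ} (h₁ : Fintype.card A ^ m + m ≤ N + 1)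
    (h₂ : N < Fintype.card A ^ (m + 1) + m) :
    ∃ w : List A, w.length = N ∧ Covers m w ∧ Distinct (m + 1) w := by
  obtain hk | hk : Fintype.card A = 1 ∨ 2 ≤ Fintype.card A := by
    have := Fintype.card_pos (α := A)
    omega
  · have : Subsingleton A := Fintype.card_le_one_iff_subsingleton.1 hk.le
    let a : A := Classical.arbitrary A
    rw [hk, one_pow] at h₁ h₂
    refine ⟨replicate N a, length_replicate, fun u hu => ?_, fun i hi => ?_⟩
    · rw [(eq_replicate_iff (l := u) (n := N)).2 ⟨by omega, fun b _ => Subsingleton.elim b a⟩]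
    · simp only [length_replicate, Set.mem_ofPred_eq] at hi
      omega
  · have := Nat.one_le_pow m _ (by omega : 0 < Fintype.card A)
    obtain ⟨c, hc, htrail⟩ := exists_closedTrail hk m
    obtain ⟨w, hw, hcov, hd⟩ := htrail.exists_covers_distinct (E := N - m) (by omega) (by omega)
    exact ⟨w, by omega, hcov, hd⟩

theorem complexity_eq_min [Nonempty A] {n : ℕ} {w : List A} (hc : Covers m w)
    (hd : Distinct (m + 1) w) (h₁ : Fintype.card A ^ m + m ≤ w.length + 1)
    (h₂ : w.length < Fintype.card A ^ (m + 1) + m) (hn : n ≤ w.length) :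
    complexity w n = min (Fintype.card A ^ n) (w.length - n + 1) := by
  have hk := Fintype.card_pos (α := A)
  rcases le_or_gt n m with hnm | hnm
  · have := Nat.pow_le_pow_right hk hnm
    rw [complexity_eq_pow_of_covers hc hnm]
    omega
  · have := Nat.pow_le_pow_right hk (show m + 1 ≤ n from hnm)
    rw [complexity_eq_of_distinct (hd.mono hnm)]
    omega

end Construction

theorem exists_pow_add_le_lt {k : ℕ} (hk : 1 ≤ k) (N : ℕ) :
    ∃ m, k ^ m + m ≤ N + 1 ∧ N < k ^ (m + 1) + m := by
  have hmono : Monotone (k ^ · : ℕ → ℕ) := fun _ _ h => Nat.pow_le_pow_right hk h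
  obtain ⟨m, h₁, h₂⟩ := StrictMono.exists_between_of_tendsto_atTop (t := fun m => k ^ m + m)
    (hmono.add_strictMono strictMono_id)
    (Filter.tendsto_atTop_mono (fun m => Nat.le_add_left m _) Filter.tendsto_id)
    (x := N + 2) (by simp only [pow_zero]; omega)
  exact ⟨m, by omega, by omega⟩

end DeBruijn

open DeBruijn in
theorem exists_deBruijn_word_general {A : Type*} [Fintype A] (k N : ℕ)
    (hk : Fintype.card A = k) (hk1 : 1 ≤ k) :
    ∃ w : List A, w.length = N ∧
      ∀ n, 1 ≤ n → n ≤ N → complexity w n = min (k ^ n) (N - n + 1) := by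
  subst hk
  have : Nonempty A := Fintype.card_pos_iff.1 hk1
  obtain ⟨m, h₁, h₂⟩ := exists_pow_add_le_lt hk1 N
  obtain ⟨w, rfl, hcov, hd⟩ := exists_covers_distinct h₁ h₂
  exact ⟨w, rfl, fun n _ hn => complexity_eq_min hcov hd h₁ h₂ hn⟩

/-- For every `N > 0` and every alphabet with `k ≥ 1` letters, there exists a
de Bruijn word of length `N`: a word `w` with `p_w(n) = min (k^n) (N - n + 1)`
for all `1 ≤ n ≤ N`. -/
theorem exists_deBruijn_word {A : Type*} [Fintype A] (k N : ℕ)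
    (hk : Fintype.card A = k) (hk1 : 1 ≤ k) (hN : 0 < N) :
    ∃ w : List A, w.length = N ∧
      ∀ n, 1 ≤ n → n ≤ N → complexity w n = min (k ^ n) (N - n + 1) :=
  exists_deBruijn_word_general k N hk hk1
end

section
/- The subword complexity sequence of a nonempty finite word w of length N over a finite alphabet is unimodal, and moreover, once it starts decreasing it decreases by exactly 1 until it reaches 1. Precisely: there exists t with 1 ≤ t ≤ N such that p_w(n) ≤ p_w(n+1) for all 1 ≤ n < t, p_w(n+1) = p_w(n) − 1 for all t ≤ n < N, and p_w(N) = 1. -/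
namespace SubwordComplexity

variable {A : Type*}

def factorsOfLength (w : List A) (n : ℕ) : Set (List A) := {u | u.length = n ∧ u <:+: w}

theorem complexity_eq_ncard (w : List A) (n : ℕ) :
    complexity w n = (factorsOfLength w n).ncard := rfl

theorem factorsOfLength_finite (w : List A) (n : ℕ) : (factorsOfLength w n).Finite := by
  classical
  refine w.sublists.toFinset.finite_toSet.subset fun u hu => ?_
  simpa using hu.2.sublist

theorem take_mem_factorsOfLength {w v : List A} {n : ℕ} (hv : v ∈ factorsOfLength w (n + 1)) :
    v.take n ∈ factorsOfLength w n :=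
  ⟨by simp [hv.1], (List.take_prefix n v).isInfix.trans hv.2⟩

theorem tail_mem_factorsOfLength {w v : List A} {n : ℕ} (hv : v ∈ factorsOfLength w (n + 1)) :
    v.tail ∈ factorsOfLength w n :=
  ⟨by simp [hv.1], (List.tail_suffix v).isInfix.trans hv.2⟩

theorem drop_mem_factorsOfLength (w : List A) {n : ℕ} (hn : n ≤ w.length) :
    w.drop (w.length - n) ∈ factorsOfLength w n :=
  ⟨by simp [Nat.sub_sub_self hn], (List.drop_suffix _ _).isInfix⟩

theorem exists_append_singleton_infix_of_not_suffix {u w : List A} (h : u <:+: w)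
    (hs : ¬ u <:+ w) : ∃ a, u ++ [a] <:+: w := by
  obtain ⟨s, t, rfl⟩ := h
  cases t with
  | nil => exact absurd ⟨s, by simp⟩ hs
  | cons a t => exact ⟨a, s, t, by simp⟩

theorem factorsOfLength_subset_insert_image_take (w : List A) (n : ℕ) :
    factorsOfLength w n ⊆
      insert (w.drop (w.length - n)) ((·.take n) '' factorsOfLength w (n + 1)) := by
  intro u hu
  by_cases hs : u <:+ w
  · left
    rw [List.suffix_iff_eq_drop.1 hs, hu.1]
  · right
    obtain ⟨a, ha⟩ := exists_append_singleton_infix_of_not_suffix hu.2 hs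
    exact ⟨u ++ [a], ⟨by simp [hu.1], ha⟩, List.take_left' hu.1⟩

theorem complexity_le_ncard_image_take_add_one (w : List A) (n : ℕ) :
    complexity w n ≤ ((·.take n) '' factorsOfLength w (n + 1)).ncard + 1 :=
  (Set.ncard_le_ncard (factorsOfLength_subset_insert_image_take w n)
    (((factorsOfLength_finite w _).image _).insert _)).trans (Set.ncard_insert_le _ _)

theorem complexity_le_complexity_succ_add_one (w : List A) (n : ℕ) :
    complexity w n ≤ complexity w (n + 1) + 1 :=
  (complexity_le_ncard_image_take_add_one w n).trans
    (Nat.add_le_add_right (Set.ncard_image_le (factorsOfLength_finite w _)) 1)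

theorem complexity_length (w : List A) : complexity w w.length = 1 := by
  have h : factorsOfLength w w.length = {w} := by
    ext u
    exact ⟨fun hu => hu.2.sublist.eq_of_length hu.1, fun hu => hu ▸ ⟨rfl, List.infix_refl _⟩⟩
  rw [complexity_eq_ncard, h, Set.ncard_singleton]

theorem complexity_length_succ (w : List A) : complexity w (w.length + 1) = 0 := by
  have h : factorsOfLength w (w.length + 1) = ∅ :=
    Set.eq_empty_of_forall_notMem fun u hu => by have := hu.1 ▸ hu.2.length_le; omega
  rw [complexity_eq_ncard, h, Set.ncard_empty]

/-- Every factor of length `n` has at most one right extension, and the suffix of length `n`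
has none. -/
def RightDeterministic (w : List A) (n : ℕ) : Prop :=
  Set.InjOn (·.take n) (factorsOfLength w (n + 1)) ∧
    ∀ v ∈ factorsOfLength w (n + 1), ¬ v.take n <:+ w

theorem rightDeterministic_of_complexity_succ_lt {w : List A} {n : ℕ}
    (h : complexity w (n + 1) < complexity w n) : RightDeterministic w n := by
  have hfin := factorsOfLength_finite w (n + 1)
  have himage := complexity_le_ncard_image_take_add_one w n
  have himage_le : ((·.take n) '' factorsOfLength w (n + 1)).ncard ≤ complexity w (n + 1) :=
    Set.ncard_image_le hfin
  refine ⟨Set.injOn_of_ncard_image_eq (by rw [← complexity_eq_ncard]; omega) hfin,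
    fun v hv hsuffix => ?_⟩
  have hdrop : w.drop (w.length - n) ∈ (·.take n) '' factorsOfLength w (n + 1) := by
    refine ⟨v, hv, ?_⟩
    change v.take n = _
    rw [List.suffix_iff_eq_drop.1 hsuffix, List.length_take, hv.1, Nat.min_eq_left n.le_succ]
  have hcover := factorsOfLength_subset_insert_image_take w n
  rw [Set.insert_eq_of_mem hdrop] at hcover
  have := Set.ncard_le_ncard hcover (hfin.image _)
  rw [← complexity_eq_ncard] at this
  omega

theorem complexity_succ_lt_of_rightDeterministic {w : List A} {n : ℕ} (hn : n ≤ w.length)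
    (h : RightDeterministic w n) : complexity w (n + 1) < complexity w n := by
  have hsub : (·.take n) '' factorsOfLength w (n + 1) ⊆
      factorsOfLength w n \ {w.drop (w.length - n)} := by
    rintro _ ⟨v, hv, rfl⟩
    refine ⟨take_mem_factorsOfLength hv, fun hdrop => h.2 v hv ?_⟩
    rw [show v.take n = _ from Set.mem_singleton_iff.1 hdrop]
    exact List.drop_suffix _ _
  calc complexity w (n + 1)
      = ((·.take n) '' factorsOfLength w (n + 1)).ncard := h.1.ncard_image.symm
    _ ≤ (factorsOfLength w n \ {w.drop (w.length - n)}).ncard :=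
        Set.ncard_le_ncard hsub (factorsOfLength_finite w n).sdiff
    _ < complexity w n :=
        Set.ncard_sdiff_singleton_lt_of_mem (drop_mem_factorsOfLength w hn)
          (factorsOfLength_finite w n)

theorem RightDeterministic.succ {w : List A} {n : ℕ} (h : RightDeterministic w n) :
    RightDeterministic w (n + 1) := by
  have tail_take (v : List A) : (v.take (n + 1)).tail = v.tail.take n := by
    simp [List.tail_take_eq_take_tail]
  refine ⟨?_, fun v hv hsuffix => ?_⟩
  · rintro (_ | ⟨a, v₁⟩) hv₁ (_ | ⟨b, v₂⟩) hv₂ heq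
    · rfl
    · simp [factorsOfLength] at hv₁
    · simp [factorsOfLength] at hv₂
    · simp only [List.take_succ_cons, List.cons.injEq] at heq
      exact congrArg₂ List.cons heq.1
        (h.1 (tail_mem_factorsOfLength hv₁) (tail_mem_factorsOfLength hv₂) heq.2)
  · exact h.2 v.tail (tail_mem_factorsOfLength hv)
      (tail_take v ▸ (List.tail_suffix _).trans hsuffix)

theorem complexity_succ_lt_of_le {w : List A} {n m : ℕ}
    (h : complexity w (n + 1) < complexity w n) (hnm : n ≤ m) (hm : m ≤ w.length) :
    complexity w (m + 1) < complexity w m := by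
  refine complexity_succ_lt_of_rightDeterministic hm ?_
  induction m, hnm using Nat.le_induction with
  | base => exact rightDeterministic_of_complexity_succ_lt h
  | succ m _ ih => exact (ih (by omega)).succ

end SubwordComplexity

open SubwordComplexity in
theorem complexity_unimodal_general {A : Type*} (w : List A) (hw : w ≠ [])
    (N : ℕ) (hN : w.length = N) :
    ∃ t, 1 ≤ t ∧ t ≤ N ∧
      (∀ n, 1 ≤ n → n < t → complexity w n ≤ complexity w (n + 1)) ∧
      (∀ n, t ≤ n → n < N → complexity w (n + 1) + 1 = complexity w n) ∧
      complexity w N = 1 := by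
  classical
  subst hN
  have hdrop_last : 1 ≤ w.length ∧ complexity w (w.length + 1) < complexity w w.length := by
    rw [complexity_length, complexity_length_succ]
    exact ⟨List.length_pos_iff.2 hw, Nat.one_pos⟩
  have hex : ∃ n, 1 ≤ n ∧ complexity w (n + 1) < complexity w n := ⟨_, hdrop_last⟩
  obtain ⟨ht, hdrop⟩ := Nat.find_spec hex
  refine ⟨Nat.find hex, ht, Nat.find_min' hex hdrop_last,
    fun n hn hnt => not_lt.1 fun h => Nat.find_min hex hnt ⟨hn, h⟩,
    fun n htn hn => ?_, complexity_length w⟩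
  have hlt := complexity_succ_lt_of_le hdrop htn hn.le
  have hle := complexity_le_complexity_succ_add_one w n
  omega

/-- The subword complexity sequence `(p_w(1), …, p_w(N))` of a nonempty finite
word `w` of length `N` is unimodal; moreover once it starts decreasing it
decreases by exactly `1` until it reaches `1` at `n = N`. -/
theorem complexity_unimodal {A : Type*} [Fintype A] (w : List A) (hw : w ≠ [])
    (N : ℕ) (hN : w.length = N) :
    ∃ t, 1 ≤ t ∧ t ≤ N ∧
      (∀ n, 1 ≤ n → n < t → complexity w n ≤ complexity w (n + 1)) ∧
      (∀ n, t ≤ n → n < N → complexity w (n + 1) + 1 = complexity w n) ∧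
      complexity w N = 1 :=
  complexity_unimodal_general w hw N hN
end

section
/- Let w be a finite word over an alphabet A_k with k letters, and let K_w be the minimal length of a suffix of w that occurs only once as a subword of w. Then for all n with 1 ≤ n < K_w, p_w(n+1) − p_w(n) ≤ k · (p_w(n) − p_w(n−1)). -/
/-- The number of occurrences of `u` in `w`: the number of starting positions
`i` at which the contiguous block of `w` of length `|u|` equals `u`. -/
noncomputable def occCount {A : Type*} (w u : List A) : ℕ :=
  Set.ncard {i : ℕ | i + u.length ≤ w.length ∧ (w.drop i).take u.length = u}

/-!
Let `F n` be the set of factors of `w` of length `n` and `R u` the set of letters `a` with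
`u ++ [a]` a factor. Then `p(n + 1) = ∑_{u ∈ F n} |R u|`, so
`p(n + 1) - p(n) = ∑_{u ∈ F n} (|R u| - 1)`.
Dropping the first letter of a factor can only enlarge its set of right extensions, and at most
`k` factors of length `n + 1` share the same tail `v ∈ F n`. Grouping the sum for `n + 1` by tails
therefore bounds it by `k` times the sum for `n`, provided every term `|R v| - 1` of the latter
is nonnegative. A factor shorter than `K` is right extendable: otherwise all its occurrences
end at the end of `w`, so it is a suffix occurring exactly once.
-/

namespace SubwordComplexity

open Finset

variable {A : Type*}

lemma infix_iff_exists_take_drop {w u : List A} :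
    u <:+: w ↔ ∃ i, i + u.length ≤ w.length ∧ (w.drop i).take u.length = u := by
  constructor
  · rintro ⟨s, t, rfl⟩
    refine ⟨s.length, by simp only [List.length_append]; omega, ?_⟩
    rw [List.append_assoc, List.drop_left, List.take_left]
  · rintro ⟨i, -, hu⟩
    rw [← hu]
    exact (List.take_prefix _ _).isInfix.trans (List.drop_suffix i w).isInfix

lemma exists_append_singleton_infix_of_occurrence {w u : List A} {i : ℕ}
    (hi : i + u.length < w.length) (hu : (w.drop i).take u.length = u) :
    ∃ a, u ++ [a] <:+: w := by
  have hlt : u.length < (w.drop i).length := by rw [List.length_drop]; omega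
  refine ⟨(w.drop i)[u.length], infix_iff_exists_take_drop.2 ⟨i, by simp; omega, ?_⟩⟩
  rw [List.length_append, List.length_singleton, List.take_add_one, hu,
    List.getElem?_eq_getElem hlt, Option.toList_some]

lemma suffix_and_occCount_eq_one_of_forall_not_infix {w u : List A} (hu : u <:+: w)
    (hext : ∀ a, ¬ u ++ [a] <:+: w) : u <:+ w ∧ occCount w u = 1 := by
  have hend : ∀ i, i + u.length ≤ w.length → (w.drop i).take u.length = u →
      i + u.length = w.length := fun i hi hocc => by
    by_contra hne
    obtain ⟨a, ha⟩ := exists_append_singleton_infix_of_occurrence (by omega) hocc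
    exact hext a ha
  obtain ⟨i, hi, hocc⟩ := infix_iff_exists_take_drop.1 hu
  have hi_end := hend i hi hocc
  refine ⟨?_, ?_⟩
  · rw [← hocc, List.take_of_length_le (by rw [List.length_drop]; omega)]
    exact List.drop_suffix i w
  · have hocc_set : {j | j + u.length ≤ w.length ∧ (w.drop j).take u.length = u} = {i} := by
      ext j
      refine ⟨fun ⟨hj, hjocc⟩ => ?_, fun hj => ?_⟩
      · have := hend j hj hjocc
        rw [Set.mem_singleton_iff]
        omega
      · rw [Set.mem_singleton_iff.1 hj]
        exact ⟨hi, hocc⟩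
    rw [occCount, hocc_set, Set.ncard_singleton]

lemma exists_append_singleton_infix_of_length_lt {w u : List A} {K : ℕ}
    (hK : K ∈ lowerBounds {m | ∃ u : List A, u.length = m ∧ u <:+ w ∧ occCount w u = 1})
    (hu : u <:+: w) (hlen : u.length < K) : ∃ a, u ++ [a] <:+: w := by
  by_contra! hext
  obtain ⟨hsuf, hocc⟩ := suffix_and_occCount_eq_one_of_forall_not_infix hu hext
  exact absurd (hK ⟨u, rfl, hsuf, hocc⟩) (by omega)

lemma finite_setOf_infix (w : List A) (n : ℕ) : {u : List A | u.length = n ∧ u <:+: w}.Finite :=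
  w.sublists.finite_toSet.subset fun _ hu => List.mem_sublists.2 hu.2.sublist

noncomputable def factors (w : List A) (n : ℕ) : Finset (List A) :=
  (finite_setOf_infix w n).toFinset

lemma mem_factors {w u : List A} {n : ℕ} : u ∈ factors w n ↔ u.length = n ∧ u <:+: w := by
  simp [factors]

lemma complexity_eq_card_factors (w : List A) (n : ℕ) : complexity w n = #(factors w n) := by
  rw [complexity, factors, Set.ncard_eq_toFinset_card _ (finite_setOf_infix w n)]

lemma tail_mem_factors {w u : List A} {n : ℕ} (hu : u ∈ factors w (n + 1)) :
    u.tail ∈ factors w n := by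
  rw [mem_factors] at hu ⊢
  exact ⟨by simp [hu.1], (List.tail_suffix u).isInfix.trans hu.2⟩

lemma dropLast_mem_factors {w u : List A} {n : ℕ} (hu : u ∈ factors w (n + 1)) :
    u.dropLast ∈ factors w n := by
  rw [mem_factors] at hu ⊢
  exact ⟨by simp [hu.1], (List.dropLast_prefix u).isInfix.trans hu.2⟩

section RightExtensions

variable [Fintype A]

open Classical in
noncomputable def rightExtensions (w u : List A) : Finset A :=
  {a | u ++ [a] <:+: w}

lemma mem_rightExtensions {w u : List A} {a : A} :
    a ∈ rightExtensions w u ↔ u ++ [a] <:+: w := by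
  simp [rightExtensions]

lemma rightExtensions_subset_tail (w u : List A) :
    rightExtensions w u ⊆ rightExtensions w u.tail := by
  intro a ha
  rw [mem_rightExtensions] at ha ⊢
  cases u with
  | nil => exact ha
  | cons b t => exact (List.suffix_append [b] (t ++ [a])).isInfix.trans ha

lemma filter_dropLast_eq_image [DecidableEq A] (w u : List A) {n : ℕ} (hu : u.length = n) :
    {x ∈ factors w (n + 1) | x.dropLast = u} = (rightExtensions w u).image (u ++ [·]) := by
  ext x
  simp only [mem_filter, mem_image, mem_factors, mem_rightExtensions]
  constructor
  · rintro ⟨⟨hlen, hx⟩, rfl⟩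
    have hne : x ≠ [] := List.ne_nil_of_length_pos (by omega)
    have hsplit := List.dropLast_append_getLast hne
    exact ⟨x.getLast hne, by rwa [hsplit], hsplit⟩
  · rintro ⟨a, ha, rfl⟩
    exact ⟨⟨by simp [hu], ha⟩, List.dropLast_concat⟩

lemma card_factors_succ (w : List A) (n : ℕ) :
    #(factors w (n + 1)) = ∑ u ∈ factors w n, #(rightExtensions w u) := by
  classical
  rw [card_eq_sum_card_fiberwise fun x hx => dropLast_mem_factors hx]
  refine sum_congr rfl fun u hu => ?_
  rw [filter_dropLast_eq_image w u (mem_factors.1 hu).1,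
    card_image_of_injective _ fun a b hab => by simpa using hab]

lemma card_filter_tail_eq_le [DecidableEq A] (w v : List A) (n : ℕ) :
    #{u ∈ factors w (n + 1) | u.tail = v} ≤ Fintype.card A := by
  calc #{u ∈ factors w (n + 1) | u.tail = v}
      ≤ #((univ : Finset A).image (· :: v)) := by
        refine card_le_card fun u hu => ?_
        rw [mem_filter, mem_factors] at hu
        obtain ⟨⟨hlen, -⟩, rfl⟩ := hu
        obtain ⟨a, t, rfl⟩ := List.exists_cons_of_length_eq_add_one hlen
        exact mem_image.2 ⟨a, mem_univ a, rfl⟩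
    _ ≤ Fintype.card A := card_image_le

lemma complexity_succ_sub_eq_sum (w : List A) (n : ℕ) :
    (complexity w (n + 1) : ℤ) - complexity w n =
      ∑ u ∈ factors w n, ((#(rightExtensions w u) : ℤ) - 1) := by
  rw [complexity_eq_card_factors, complexity_eq_card_factors, card_factors_succ, sum_sub_distrib,
    sum_const, nsmul_one]
  push_cast
  rfl

theorem complexity_diff_le_of_rightExtensions_nonempty (w : List A) (n : ℕ)
    (hext : ∀ v ∈ factors w n, (rightExtensions w v).Nonempty) :
    (complexity w (n + 2) : ℤ) - complexity w (n + 1) ≤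
      Fintype.card A * ((complexity w (n + 1) : ℤ) - complexity w n) := by
  classical
  rw [complexity_succ_sub_eq_sum, complexity_succ_sub_eq_sum, mul_sum,
    ← sum_fiberwise_of_maps_to fun u hu => tail_mem_factors hu]
  refine sum_le_sum fun v hv => ?_
  have hv_pos : (0 : ℤ) ≤ #(rightExtensions w v) - 1 := by
    have := (hext v hv).card_pos
    omega
  calc ∑ u ∈ factors w (n + 1) with u.tail = v, ((#(rightExtensions w u) : ℤ) - 1)
      ≤ ∑ u ∈ factors w (n + 1) with u.tail = v, ((#(rightExtensions w v) : ℤ) - 1) := by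
        refine sum_le_sum fun u hu => ?_
        rw [← (mem_filter.1 hu).2]
        have := card_le_card (rightExtensions_subset_tail w u)
        omega
    _ = #{u ∈ factors w (n + 1) | u.tail = v} * ((#(rightExtensions w v) : ℤ) - 1) := by
        rw [sum_const, nsmul_eq_mul]
    _ ≤ Fintype.card A * ((#(rightExtensions w v) : ℤ) - 1) := by
        gcongr
        exact_mod_cast card_filter_tail_eq_le w v n

end RightExtensions

end SubwordComplexity

open SubwordComplexity in
/-- Let `K` be the minimal length of a suffix of `w` that occurs exactly once
in `w`. Then for `1 ≤ n < K`, `p_w(n+1) - p_w(n) ≤ k * (p_w(n) - p_w(n-1))`,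
where `k` is the size of the alphabet. -/
theorem complexity_diff_le {A : Type*} [Fintype A] (k : ℕ)
    (hk : Fintype.card A = k) (w : List A) (K : ℕ)
    (hK : IsLeast {m | ∃ u : List A, u.length = m ∧ u <:+ w ∧ occCount w u = 1} K)
    (n : ℕ) (h1 : 1 ≤ n) (h2 : n < K) :
    (complexity w (n + 1) : ℤ) - complexity w n ≤
      k * ((complexity w n : ℤ) - complexity w (n - 1)) := by
  obtain ⟨m, rfl⟩ : ∃ m, n = m + 1 := ⟨n - 1, by omega⟩
  subst hk
  refine complexity_diff_le_of_rightExtensions_nonempty w m fun v hv => ?_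
  obtain ⟨hlen, hv⟩ := mem_factors.1 hv
  obtain ⟨a, ha⟩ := exists_append_singleton_infix_of_length_lt hK.2 hv (by omega)
  exact ⟨a, mem_rightExtensions.2 ha⟩
end

section
/- Let w be a nonempty finite word of length N over a finite alphabet, let R_w be the minimal n such that every subword of w of length n has valence at most 1, and let K_w be the minimal length of a suffix of w occurring only once in w. Then the subword complexity of w takes its maximal value at R_w, and moreover p_w(R_w) = N − max{R_w, K_w} + 1. -/
/-- The valence of a word `u` in `w`: the number of distinct letters `a`
such that `u ++ [a]` is a subword of `w`. -/
noncomputable def valence {A : Type*} (w u : List A) : ℕ :=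
  Set.ncard {a : A | (u ++ [a]) <:+: w}

/-!
Every factor of length `n + 1` is a factor `u` of length `n` followed by one of `valence w u`
letters, so `p (n + 1) = ∑ valence w u` over the factors `u` of length `n`. A factor that is not a
suffix of `w` is followed by some letter, so every factor of length `n` has valence at least `1`
except possibly the suffix of length `n`, which has valence `0` exactly when it occurs only once,
that is, when `n ≥ K`. Below `R` some factor has valence at least `2`, from `R` on every factor has
valence at most `1`. Hence `p` is nondecreasing up to `R`, nonincreasing after it, constant on
`[R, max R K]` and decreases by exactly one at each step from `max R K` to `N`, where `p N = 1`.
-/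

theorem Nat.le_apply_of_forall_le_succ_of_forall_succ_le {β : Type*} [Preorder β] {f : ℕ → β}
    {m : ℕ} (hup : ∀ n < m, f n ≤ f (n + 1)) (hdown : ∀ n, m ≤ n → f (n + 1) ≤ f n) (n : ℕ) :
    f n ≤ f m := by
  rcases le_total n m with hnm | hmn
  · exact Nat.decreasingInduction (fun k hk ih => (hup k hk).trans ih) le_rfl hnm
  · exact Nat.rel_of_forall_rel_succ_of_le_of_le (· ≥ ·) hdown le_rfl hmn

theorem Nat.apply_eq_apply_add_mul_of_forall {f : ℕ → ℕ} {a b c : ℕ} (hab : a ≤ b)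
    (h : ∀ n, a ≤ n → n < b → f n = f (n + 1) + c) : f a = f b + c * (b - a) := by
  induction b, hab using Nat.le_induction with
  | base => simp
  | succ b hab ih =>
    rw [ih fun n han hnb => h n han (by omega), h b hab (by omega), Nat.sub_add_comm hab]
    ring

namespace Subword

variable {A : Type*} {w u v : List A} {n : ℕ}

theorem exists_append_singleton_infix (hu : u <:+: w) (hsuf : ¬u <:+ w) :
    ∃ a, u ++ [a] <:+: w := by
  obtain ⟨s, t, rfl⟩ := hu
  cases t with
  | nil => exact absurd ⟨s, by simp⟩ hsuf
  | cons a t => exact ⟨a, s, t, by simp⟩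

theorem append_singleton_infix_of_take_drop_eq {i : ℕ}
    (h : (w.drop i).take u.length = u) (hi : i + u.length < w.length) :
    u ++ [w[i + u.length]] <:+: w := by
  refine ⟨w.take i, w.drop (i + u.length + 1), ?_⟩
  conv_rhs => rw [← List.take_append_drop i w, ← List.take_append_drop u.length (w.drop i), h,
    List.drop_drop, List.drop_eq_getElem_cons hi]
  simp

theorem suffix_eq_of_length_eq (hu : u <:+ w) (hv : v <:+ w) (h : u.length = v.length) :
    u = v := by
  rcases List.suffix_or_suffix_of_suffix hu hv with huv | hvu
  · exact huv.eq_of_length h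
  · exact (hvu.eq_of_length h.symm).symm

section Valence

variable [Finite A]

theorem one_le_valence_iff : 1 ≤ valence w u ↔ ∃ a, u ++ [a] <:+: w :=
  Set.ncard_pos (Set.toFinite _)

theorem valence_eq_zero_iff : valence w u = 0 ↔ ∀ a, ¬u ++ [a] <:+: w := by
  simp [valence, Set.ncard_eq_zero (Set.toFinite _), Set.eq_empty_iff_forall_notMem]

theorem valence_self : valence w w = 0 :=
  valence_eq_zero_iff.2 fun a h => by simpa using h.length_le

theorem valence_le_valence_of_suffix (h : u <:+ v) : valence w v ≤ valence w u := by
  refine Set.ncard_le_ncard (fun a ha => List.IsInfix.trans ?_ ha) (Set.toFinite _)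
  obtain ⟨s, rfl⟩ := h
  exact ⟨s, [], by simp⟩

theorem one_le_valence_of_not_suffix (hu : u <:+: w) (hsuf : ¬u <:+ w) : 1 ≤ valence w u :=
  one_le_valence_iff.2 (exists_append_singleton_infix hu hsuf)

-- An occurrence of a suffix other than the final one is followed by a letter.
theorem occCount_eq_one_iff (hu : u <:+ w) : occCount w u = 1 ↔ valence w u = 0 := by
  have mem_occ (s t : List A) (h : w = s ++ u ++ t) :
      s.length ∈ {i | i + u.length ≤ w.length ∧ (w.drop i).take u.length = u} := by
    subst h; simp
  obtain ⟨s, rfl⟩ := hu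
  have hend := mem_occ s [] (by simp)
  rw [occCount, Set.ncard_eq_one, valence_eq_zero_iff]
  constructor
  · rintro ⟨i, hi⟩ a ⟨s', t, ht⟩
    have hocc := mem_occ s' (a :: t) (by simp [← ht])
    rw [hi, Set.mem_singleton_iff] at hend hocc
    have hlen := congrArg List.length ht
    simp only [List.length_append, List.length_singleton] at hlen
    omega
  · intro h
    refine ⟨s.length, Set.eq_singleton_iff_unique_mem.2 ⟨hend, fun i ⟨hi, htake⟩ => ?_⟩⟩
    by_contra hne
    have hlt : i + u.length < (s ++ u).length := by
      simp only [List.length_append] at hi ⊢; omega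
    exact h _ (append_singleton_infix_of_take_drop_eq htake hlt)

end Valence

theorem finite_setOf_infix (w : List A) (n : ℕ) : {u : List A | u.length = n ∧ u <:+: w}.Finite :=
  w.sublists.finite_toSet.subset fun _ hu => List.mem_sublists.2 hu.2.sublist

noncomputable def factors (w : List A) (n : ℕ) : Finset (List A) :=
  (finite_setOf_infix w n).toFinset

@[simp]
theorem mem_factors : u ∈ factors w n ↔ u.length = n ∧ u <:+: w :=
  Set.Finite.mem_toFinset _

theorem complexity_eq_card_factors (w : List A) (n : ℕ) :
    complexity w n = (factors w n).card :=
  Set.ncard_eq_toFinset_card _ _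

theorem complexity_length (w : List A) : complexity w w.length = 1 := by
  rw [complexity, Set.ncard_eq_one]
  exact ⟨w, Set.ext fun u =>
    ⟨fun ⟨hlen, hu⟩ => hu.eq_of_length hlen, fun h => ⟨h ▸ rfl, h ▸ List.infix_rfl⟩⟩⟩

theorem complexity_succ_eq_sum_valence (w : List A) (n : ℕ) :
    complexity w (n + 1) = ∑ u ∈ factors w n, valence w u := by
  classical
  have hmaps : Set.MapsTo List.dropLast (factors w (n + 1) : Set (List A)) (factors w n) :=
    fun v hv => by
      simp only [Finset.mem_coe, mem_factors] at hv ⊢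
      exact ⟨by simp [hv.1], (List.dropLast_prefix v).isInfix.trans hv.2⟩
  rw [complexity_eq_card_factors, Finset.card_eq_sum_card_fiberwise hmaps]
  refine Finset.sum_congr rfl fun u hu => ?_
  have hinj : Function.Injective fun a : A => u ++ [a] := fun a b h => by simpa using h
  rw [valence, ← Set.ncard_image_of_injective _ hinj, ← Set.ncard_coe_finset]
  congr 1
  ext v
  rw [mem_factors] at hu
  simp only [Finset.coe_filter, mem_factors, Set.mem_image]
  constructor
  · rintro ⟨⟨hlen, hv⟩, rfl⟩
    have hne : v ≠ [] := List.ne_nil_of_length_pos (by omega)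
    rw [← List.dropLast_append_getLast hne] at hv
    exact ⟨_, hv, List.dropLast_append_getLast hne⟩
  · rintro ⟨a, ha, rfl⟩
    exact ⟨⟨by simp [hu.1], ha⟩, List.dropLast_concat⟩

theorem complexity_le_complexity_succ_of_one_le_valence
    (h : ∀ u ∈ factors w n, 1 ≤ valence w u) : complexity w n ≤ complexity w (n + 1) := by
  rw [complexity_succ_eq_sum_valence, complexity_eq_card_factors]
  simpa using Finset.card_nsmul_le_sum _ _ 1 h

theorem complexity_succ_le_complexity_of_valence_le_one
    (h : ∀ u ∈ factors w n, valence w u ≤ 1) : complexity w (n + 1) ≤ complexity w n := by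
  rw [complexity_succ_eq_sum_valence, complexity_eq_card_factors]
  simpa using Finset.sum_le_card_nsmul _ _ 1 h

theorem complexity_succ_add_one_le_of_valence_eq_zero
    (h : ∀ u ∈ factors w n, valence w u ≤ 1) (hu : u ∈ factors w n) (hval : valence w u = 0) :
    complexity w (n + 1) + 1 ≤ complexity w n := by
  classical
  have := Finset.sum_le_card_nsmul ((factors w n).erase u) (fun v => valence w v) 1
    fun v hv => h v (Finset.mem_of_mem_erase hv)
  rw [complexity_succ_eq_sum_valence, complexity_eq_card_factors,
    ← Finset.add_sum_erase _ _ hu, ← Finset.card_erase_add_one hu]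
  simp only [smul_eq_mul, mul_one] at this
  omega

theorem exists_two_le_valence_of_lt {R : ℕ}
    (hR : R ∈ lowerBounds {n | ∀ u : List A, u.length = n → u <:+: w → valence w u ≤ 1})
    (hn : n < R) : ∃ u ∈ factors w n, 2 ≤ valence w u := by
  by_contra! h
  exact absurd (hR fun u hu hinf => Nat.le_of_lt_succ (h u (mem_factors.2 ⟨hu, hinf⟩))) (by omega)

variable [Finite A]

-- Only the suffix of length `n` can have valence `0`.
theorem card_le_sum_valence_add_one {S : Finset (List A)} (hS : S ⊆ factors w n) :
    S.card ≤ ∑ u ∈ S, valence w u + 1 := by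
  classical
  have hsuffix : (S.filter (· <:+ w)).card ≤ 1 := by
    refine Finset.card_le_one.2 fun u hu v hv => ?_
    simp only [Finset.mem_filter] at hu hv
    exact suffix_eq_of_length_eq hu.2 hv.2
      ((mem_factors.1 (hS hu.1)).1.trans (mem_factors.1 (hS hv.1)).1.symm)
  calc S.card = ∑ u ∈ S, 1 := Finset.card_eq_sum_ones S
    _ ≤ ∑ u ∈ S, (valence w u + if u <:+ w then 1 else 0) := by
      refine Finset.sum_le_sum fun u hu => ?_
      by_cases hsuf : u <:+ w
      · simp [hsuf]
      · simpa [hsuf] using one_le_valence_of_not_suffix (mem_factors.1 (hS hu)).2 hsuf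
    _ = ∑ u ∈ S, valence w u + (S.filter (· <:+ w)).card := by
      rw [Finset.sum_add_distrib, Finset.card_filter]
    _ ≤ ∑ u ∈ S, valence w u + 1 := by omega

theorem complexity_le_complexity_succ_add_one (w : List A) (n : ℕ) :
    complexity w n ≤ complexity w (n + 1) + 1 := by
  rw [complexity_succ_eq_sum_valence, complexity_eq_card_factors]
  exact card_le_sum_valence_add_one subset_rfl

theorem complexity_le_complexity_succ_of_two_le_valence (hu : u ∈ factors w n)
    (hval : 2 ≤ valence w u) : complexity w n ≤ complexity w (n + 1) := by
  classical
  have := card_le_sum_valence_add_one (Finset.erase_subset u (factors w n))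
  rw [complexity_succ_eq_sum_valence, complexity_eq_card_factors,
    ← Finset.add_sum_erase _ _ hu, ← Finset.card_erase_add_one hu]
  omega

theorem valence_le_one_of_le {R : ℕ}
    (hR : ∀ u : List A, u.length = R → u <:+: w → valence w u ≤ 1)
    (hu : u <:+: w) (hRu : R ≤ u.length) : valence w u ≤ 1 :=
  (valence_le_valence_of_suffix (List.drop_suffix (u.length - R) u)).trans <|
    hR _ (by rw [List.length_drop]; omega) ((List.drop_suffix _ u).isInfix.trans hu)

theorem valence_eq_zero_of_le {K : ℕ}
    (hK : ∃ u : List A, u.length = K ∧ u <:+ w ∧ occCount w u = 1)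
    (hu : u <:+ w) (hKu : K ≤ u.length) : valence w u = 0 := by
  obtain ⟨v, rfl, hv, hocc⟩ := hK
  exact Nat.eq_zero_of_le_zero <|
    (valence_le_valence_of_suffix (List.suffix_of_suffix_length_le hv hu hKu)).trans
      ((occCount_eq_one_iff hv).1 hocc).le

theorem one_le_valence_of_lt {K : ℕ}
    (hK : K ∈ lowerBounds {m | ∃ u : List A, u.length = m ∧ u <:+ w ∧ occCount w u = 1})
    (hu : u <:+: w) (huK : u.length < K) : 1 ≤ valence w u := by
  by_cases hsuf : u <:+ w
  · by_contra! h
    have := hK ⟨u, rfl, hsuf, (occCount_eq_one_iff hsuf).2 (by omega)⟩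
    omega
  · exact one_le_valence_of_not_suffix hu hsuf

end Subword

open Subword

theorem complexity_max_at_R_general {A : Type*} [Fintype A] (w : List A)
    (N : ℕ) (hN : w.length = N) (R K : ℕ)
    (hR : IsLeast {n | ∀ u : List A, u.length = n → u <:+: w → valence w u ≤ 1} R)
    (hK : IsLeast {m | ∃ u : List A, u.length = m ∧ u <:+ w ∧ occCount w u = 1} K) :
    (∀ n, complexity w n ≤ complexity w R) ∧
      complexity w R = N - max R K + 1 := by
  subst hN
  have hRw : R ≤ w.length :=
    hR.2 fun u hu hinf => by rw [hinf.eq_of_length hu, valence_self]; omega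
  have hKw : K ≤ w.length :=
    hK.2 ⟨w, rfl, List.suffix_rfl, (occCount_eq_one_iff List.suffix_rfl).2 valence_self⟩
  have hdown : ∀ n, R ≤ n → complexity w (n + 1) ≤ complexity w n := fun n hn =>
    complexity_succ_le_complexity_of_valence_le_one fun u hu =>
      valence_le_one_of_le hR.1 (mem_factors.1 hu).2 ((mem_factors.1 hu).1 ▸ hn)
  have hflat : ∀ n, R ≤ n → n < max R K → complexity w n = complexity w (n + 1) + 0 :=
    fun n hRn hnK => le_antisymm (complexity_le_complexity_succ_of_one_le_valence fun u hu =>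
        one_le_valence_of_lt hK.2 (mem_factors.1 hu).2 ((mem_factors.1 hu).1 ▸ by omega))
      (hdown n hRn)
  have hdrop : ∀ n, max R K ≤ n → n < w.length → complexity w n = complexity w (n + 1) + 1 :=
    fun n hn hnw => le_antisymm (complexity_le_complexity_succ_add_one w n) <|
      complexity_succ_add_one_le_of_valence_eq_zero
        (fun u hu => valence_le_one_of_le hR.1 (mem_factors.1 hu).2
          ((mem_factors.1 hu).1 ▸ (le_max_left R K).trans hn))
        (mem_factors.2
          ⟨by rw [List.length_drop]; omega, (List.drop_suffix (w.length - n) w).isInfix⟩)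
        (valence_eq_zero_of_le hK.1 (List.drop_suffix _ w) (by rw [List.length_drop]; omega))
  refine ⟨Nat.le_apply_of_forall_le_succ_of_forall_succ_le (fun n hn => ?_) hdown, ?_⟩
  · obtain ⟨u, hu, hval⟩ := exists_two_le_valence_of_lt hR.2 hn
    exact complexity_le_complexity_succ_of_two_le_valence hu hval
  · rw [Nat.apply_eq_apply_add_mul_of_forall (le_max_left R K) hflat,
      Nat.apply_eq_apply_add_mul_of_forall (max_le hRw hKw) hdrop, complexity_length]
    omega

/-- Let `w` be a nonempty finite word of length `N`, let `R` be the minimal `n`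
such that every subword of `w` of length `n` has valence at most `1`, and `K`
the minimal length of a suffix of `w` occurring exactly once in `w`. Then the
subword complexity of `w` takes its maximal value at `R`, and moreover
`p_w(R) = N - max R K + 1`. -/
theorem complexity_max_at_R {A : Type*} [Fintype A] (w : List A) (hw : w ≠ [])
    (N : ℕ) (hN : w.length = N) (R K : ℕ)
    (hR : IsLeast {n | ∀ u : List A, u.length = n → u <:+: w → valence w u ≤ 1} R)
    (hK : IsLeast {m | ∃ u : List A, u.length = m ∧ u <:+ w ∧ occCount w u = 1} K) :
    (∀ n, complexity w n ≤ complexity w R) ∧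
      complexity w R = N - max R K + 1 :=
  complexity_max_at_R_general w N hN R K hR hK
end

section
/- Let w be a right-infinite word over a finite alphabet, and suppose there exists N ≥ 1 such that p_w(N) = p_w(N+1). Then w is ultimately periodic, and p_w(n) = p_w(N) for all n ≥ N. -/
/-!
Equal complexities in lengths `N` and `N + 1` mean that every factor of length `N` has a
unique right extension, so the length-`N` factor at a position determines the next letter
and hence, inductively, the whole suffix starting there. By pigeonhole two positions
`i < j` carry the same length-`N` factor, which gives period `j - i` from `i` on; and for
`n ≥ N` truncation to length `N` is a bijection from the factors of length `n` onto those
of length `N`.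
-/

/-- A finite word `u` is a subword (factor) of the right-infinite word `w` if
it occurs as a contiguous block of consecutive letters of `w`. -/
def IsFactor {A : Type*} (w : ℕ → A) (u : List A) : Prop :=
  ∃ i : ℕ, u = (List.range u.length).map fun j => w (i + j)

/-- The subword complexity of a right-infinite word `w`: the number of
distinct subwords of `w` of length `n`. -/
noncomputable def icomplexity {A : Type*} (w : ℕ → A) (n : ℕ) : ℕ :=
  Set.ncard {u : List A | u.length = n ∧ IsFactor w u}

/-- A right-infinite word is ultimately periodic if from some point on it is
periodic with some period `p ≥ 1`. -/
def UltimatelyPeriodic {A : Type*} (w : ℕ → A) : Prop :=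
  ∃ p, 1 ≤ p ∧ ∃ M, ∀ i, M ≤ i → w (i + p) = w i

section Factors

variable {A : Type*} (w : ℕ → A)

def factorAt (i n : ℕ) : List A :=
  (List.range n).map fun j => w (i + j)

@[simp]
lemma length_factorAt (i n : ℕ) : (factorAt w i n).length = n := by
  simp [factorAt]

lemma factorAt_eq_factorAt_iff {i j n : ℕ} :
    factorAt w i n = factorAt w j n ↔ ∀ m < n, w (i + m) = w (j + m) := by
  simp [factorAt, List.map_inj_left]

lemma take_factorAt (i : ℕ) {N n : ℕ} (h : N ≤ n) :
    (factorAt w i n).take N = factorAt w i N := by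
  simp [factorAt, ← List.map_take, List.take_range, Nat.min_eq_left h]

lemma setOf_isFactor_eq_range (n : ℕ) :
    {u : List A | u.length = n ∧ IsFactor w u} = Set.range (factorAt w · n) := by
  ext u
  constructor
  · rintro ⟨rfl, i, hu⟩
    exact ⟨i, hu.symm⟩
  · rintro ⟨i, rfl⟩
    exact ⟨length_factorAt w i n, i, by simp [factorAt]⟩

lemma icomplexity_eq_ncard_range (n : ℕ) :
    icomplexity w n = (Set.range (factorAt w · n)).ncard := by
  rw [icomplexity, setOf_isFactor_eq_range]

lemma image_take_range_factorAt {N n : ℕ} (h : N ≤ n) :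
    List.take N '' Set.range (factorAt w · n) = Set.range (factorAt w · N) := by
  rw [← Set.range_comp]
  exact congrArg Set.range (funext fun i => take_factorAt w i h)

lemma icomplexity_eq_of_factorAt_eq {N n : ℕ} (hNn : N ≤ n)
    (hext : ∀ i j, factorAt w i N = factorAt w j N → factorAt w i n = factorAt w j n) :
    icomplexity w n = icomplexity w N := by
  have hinj : Set.InjOn (List.take N) (Set.range (factorAt w · n)) := by
    rintro _ ⟨i, rfl⟩ _ ⟨j, rfl⟩ hij
    exact hext i j (by simpa only [take_factorAt w _ hNn] using hij)
  rw [icomplexity_eq_ncard_range, ← hinj.ncard_image, image_take_range_factorAt w hNn,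
    icomplexity_eq_ncard_range]

lemma exists_lt_factorAt_eq [Finite A] (N : ℕ) :
    ∃ i j, i < j ∧ factorAt w i N = factorAt w j N :=
  (List.finite_length_eq A N).exists_lt_map_eq_of_forall_mem (length_factorAt w · N)

lemma apply_add_eq_of_icomplexity_eq [Finite A] {N : ℕ}
    (h : icomplexity w N = icomplexity w (N + 1)) {i j : ℕ}
    (hij : factorAt w i N = factorAt w j N) : w (i + N) = w (j + N) := by
  have hinj : Set.InjOn (List.take N) (Set.range (factorAt w · (N + 1))) := by
    refine Set.injOn_of_ncard_image_eq ?_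
      ((List.finite_length_eq A (N + 1)).subset (Set.range_subset_iff.2 (length_factorAt w · _)))
    rw [image_take_range_factorAt w N.le_succ, ← icomplexity_eq_ncard_range,
      ← icomplexity_eq_ncard_range, h]
  have hext : factorAt w i (N + 1) = factorAt w j (N + 1) :=
    hinj ⟨i, rfl⟩ ⟨j, rfl⟩ (by simp only [take_factorAt w _ N.le_succ, hij])
  exact (factorAt_eq_factorAt_iff w).1 hext N N.lt_succ_self

lemma apply_add_eq_of_factorAt_eq {N : ℕ}
    (hdet : ∀ i j, factorAt w i N = factorAt w j N → w (i + N) = w (j + N)) {i j : ℕ}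
    (hij : factorAt w i N = factorAt w j N) (k : ℕ) : w (i + k) = w (j + k) := by
  induction k using Nat.strong_induction_on with
  | _ k ih =>
    rcases lt_or_ge k N with hk | hk
    · exact (factorAt_eq_factorAt_iff w).1 hij k hk
    · have hprev : factorAt w (i + (k - N)) N = factorAt w (j + (k - N)) N :=
        (factorAt_eq_factorAt_iff w).2 fun m hm => by
          simpa only [add_assoc] using ih (k - N + m) (by omega)
      simpa only [add_assoc, Nat.sub_add_cancel hk] using hdet _ _ hprev

end Factors

lemma ultimatelyPeriodic_of_forall_apply_add_eq {A : Type*} {w : ℕ → A} {i j : ℕ}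
    (hij : i < j) (h : ∀ k, w (i + k) = w (j + k)) : UltimatelyPeriodic w := by
  refine ⟨j - i, by omega, i, fun n hn => ?_⟩
  have := h (n - i)
  rwa [Nat.add_sub_cancel' hn, show j + (n - i) = n + (j - i) by omega, eq_comm] at this

theorem ultimatelyPeriodic_of_complexity_eq_general {A : Type*} [Fintype A]
    (w : ℕ → A) (N : ℕ)
    (h : icomplexity w N = icomplexity w (N + 1)) :
    UltimatelyPeriodic w ∧ ∀ n, N ≤ n → icomplexity w n = icomplexity w N := by
  have hext : ∀ i j, factorAt w i N = factorAt w j N → ∀ k, w (i + k) = w (j + k) :=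
    fun i j => apply_add_eq_of_factorAt_eq w fun _ _ => apply_add_eq_of_icomplexity_eq w h
  refine ⟨?_, fun n hn => icomplexity_eq_of_factorAt_eq w hn fun i j hij =>
    (factorAt_eq_factorAt_iff w).2 fun m _ => hext i j hij m⟩
  obtain ⟨i, j, hlt, hij⟩ := exists_lt_factorAt_eq w N
  exact ultimatelyPeriodic_of_forall_apply_add_eq hlt (hext i j hij)

/-- If `p_w(N) = p_w(N+1)` for some `N ≥ 1`, then the right-infinite word `w`
is ultimately periodic and `p_w(n) = p_w(N)` for all `n ≥ N`. -/
theorem ultimatelyPeriodic_of_complexity_eq {A : Type*} [Fintype A]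
    (w : ℕ → A) (N : ℕ) (hN : 1 ≤ N)
    (h : icomplexity w N = icomplexity w (N + 1)) :
    UltimatelyPeriodic w ∧ ∀ n, N ≤ n → icomplexity w n = icomplexity w N :=
  ultimatelyPeriodic_of_complexity_eq_general w N h
end

section
/- If w is an unbalanced right-infinite word over the binary alphabet {0,1}, then there exists a finite word w' (a subword of w) such that both 0w'0 and 1w'1 are subwords of w. -/
/-- The height of a finite binary word: the number of occurrences of the
letter `1` (here `true`). -/
def height (u : List Bool) : ℕ := u.count true

/-- A right-infinite binary word is balanced if any two of its subwords of
equal length have heights differing by at most `1`. -/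
def BalancedWord (w : ℕ → Bool) : Prop :=
  ∀ u v : List Bool, IsFactor w u → IsFactor w v → u.length = v.length →
    |(height u : ℤ) - (height v : ℤ)| ≤ 1

/-!
Among all pairs of factors of equal length whose heights differ by at least `2`, take one of
minimal length `n`, starting at positions `i` and `j`. Let `d k` (`heightGap w i j k`) be the
height of the prefix of length `k` of the first minus that of the second. Then `d 0 = 0`,
`d n ≥ 2`, and by minimality `d b - d a ≤ 1` on every proper subinterval `[a, b]` of `[0, n]`.
This forces `d = 0, 1, 1, …, 1, 2`: the two factors read `1 w' 1` and `0 w' 0` with the same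
middle `w'`.
-/

section Window

variable {A : Type*} (w : ℕ → A)

def window (i n : ℕ) : List A := (List.range n).map fun k => w (i + k)

@[simp]
lemma length_window (i n : ℕ) : (window w i n).length = n := by
  simp [window]

lemma isFactor_window (i n : ℕ) : IsFactor w (window w i n) :=
  ⟨i, by rw [length_window]; rfl⟩

lemma window_add (i m n : ℕ) : window w i (m + n) = window w i m ++ window w (i + m) n := by
  simp only [window, List.range_add, List.map_append, List.map_map, Function.comp_def,
    Nat.add_assoc]

lemma window_one (i : ℕ) : window w i 1 = [w i] := rfl

lemma window_add_two (i m : ℕ) :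
    window w i (m + 2) = w i :: (window w (i + 1) m ++ [w (i + (m + 1))]) := by
  rw [show m + 2 = 1 + (m + 1) by omega, window_add, window_add w (i + 1) m 1,
    Nat.add_assoc i 1 m, Nat.add_comm 1 m]
  rfl

end Window

lemma height_append (u v : List Bool) : height (u ++ v) = height u + height v :=
  List.count_append

lemma height_singleton (b : Bool) : height [b] = b.toNat := by
  cases b <;> rfl

lemma height_le_length (u : List Bool) : height u ≤ u.length :=
  List.count_le_length

lemma exists_height_window_add_two_le {w : ℕ → Bool} (h : ¬ BalancedWord w) :
    ∃ n i j, height (window w j n) + 2 ≤ height (window w i n) := by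
  simp only [BalancedWord, not_forall, abs_le, not_and_or, not_le] at h
  obtain ⟨u, v, ⟨i, hu⟩, ⟨j, hv⟩, hlen, hdiff⟩ := h
  rw [congrArg height hu, congrArg height hv, ← hlen] at hdiff
  rcases hdiff with hlt | hlt
  · exact ⟨u.length, j, i, by unfold window; omega⟩
  · exact ⟨u.length, i, j, by unfold window; omega⟩

lemma eq_one_of_forall_sub_le_one {d : ℕ → ℤ} {n : ℕ} (h0 : d 0 = 0) (hn : 2 ≤ d n)
    (hsub : ∀ a b, a ≤ b → b ≤ n → b - a < n → d b - d a ≤ 1) {k : ℕ} (hk : 0 < k)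
    (hkn : k < n) : d k = 1 := by
  have := hsub 0 k (Nat.zero_le k) hkn.le (by omega)
  have := hsub k n hkn.le le_rfl (by omega)
  omega

lemma eq_two_of_forall_sub_le_one {d : ℕ → ℤ} {n : ℕ} (h0 : d 0 = 0) (hn : 2 ≤ d n)
    (hsub : ∀ a b, a ≤ b → b ≤ n → b - a < n → d b - d a ≤ 1) (h1n : 1 < n) :
    d n = 2 := by
  have := eq_one_of_forall_sub_le_one h0 hn hsub Nat.one_pos h1n
  have := hsub 1 n h1n.le le_rfl (by omega)
  omega

lemma Bool.toNat_sub_toNat_eq_one_iff {a b : Bool} :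
    (a.toNat : ℤ) - b.toNat = 1 ↔ a = true ∧ b = false := by
  cases a <;> cases b <;> decide

lemma Bool.toNat_sub_toNat_eq_zero_iff {a b : Bool} : (a.toNat : ℤ) - b.toNat = 0 ↔ a = b := by
  cases a <;> cases b <;> decide

section HeightGap

variable (w : ℕ → Bool)

def heightGap (i j k : ℕ) : ℤ := height (window w i k) - height (window w j k)

lemma heightGap_zero (i j : ℕ) : heightGap w i j 0 = 0 := by
  simp [heightGap, window]

lemma heightGap_sub (i j : ℕ) {a b : ℕ} (hab : a ≤ b) :
    heightGap w i j b - heightGap w i j a = heightGap w (i + a) (j + a) (b - a) := by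
  obtain ⟨c, rfl⟩ := Nat.exists_eq_add_of_le hab
  simp only [heightGap, window_add, height_append, Nat.add_sub_cancel_left]
  push_cast
  ring

lemma heightGap_succ_sub (i j k : ℕ) :
    heightGap w i j (k + 1) - heightGap w i j k = (w (i + k)).toNat - (w (j + k)).toNat := by
  rw [heightGap_sub w i j (Nat.le_add_right k 1), Nat.add_sub_cancel_left, heightGap,
    window_one, window_one, height_singleton, height_singleton]

end HeightGap

lemma exists_window_eq_of_minimal {w : ℕ → Bool} {n i j : ℕ}
    (hmin : ∀ n' < n, ∀ p q, height (window w p n') ≤ height (window w q n') + 1)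
    (hij : height (window w j n) + 2 ≤ height (window w i n)) :
    ∃ m, window w i n = true :: (window w (i + 1) m ++ [true]) ∧
      window w j n = false :: (window w (i + 1) m ++ [false]) := by
  have h0 := heightGap_zero w i j
  have hn : 2 ≤ heightGap w i j n := by rw [heightGap]; omega
  have hsub : ∀ a b, a ≤ b → b ≤ n → b - a < n →
      heightGap w i j b - heightGap w i j a ≤ 1 := by
    intro a b hab _ hlt
    rw [heightGap_sub w i j hab, heightGap]
    have := hmin (b - a) hlt (i + a) (j + a)
    omega
  obtain ⟨m, rfl⟩ : ∃ m, n = m + 2 := by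
    have := height_le_length (window w i n)
    exact ⟨n - 2, by rw [length_window] at this; omega⟩
  have hone : ∀ k, 0 < k → k < m + 2 → heightGap w i j k = 1 :=
    fun _ => eq_one_of_forall_sub_le_one h0 hn hsub
  have htwo := eq_two_of_forall_sub_le_one h0 hn hsub (by omega)
  have ⟨hi, hj⟩ : w i = true ∧ w j = false := by
    apply Bool.toNat_sub_toNat_eq_one_iff.mp
    simpa [h0, hone 1 (by omega) (by omega)] using (heightGap_succ_sub w i j 0).symm
  have ⟨hi', hj'⟩ : w (i + (m + 1)) = true ∧ w (j + (m + 1)) = false := by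
    apply Bool.toNat_sub_toNat_eq_one_iff.mp
    rw [← heightGap_succ_sub, htwo, hone (m + 1) (by omega) (by omega)]
    rfl
  have hmid : window w j (m + 2) = w j :: (window w (i + 1) m ++ [w (j + (m + 1))]) := by
    refine (window_add_two w j m).trans (congrArg _ (congrArg (· ++ _) ?_))
    refine List.map_congr_left fun k hk => (Bool.toNat_sub_toNat_eq_zero_iff.mp ?_).symm
    have hk := List.mem_range.mp hk
    rw [Nat.add_assoc, Nat.add_assoc, Nat.add_comm 1 k, ← heightGap_succ_sub,
      hone (k + 1 + 1) (by omega) (by omega), hone (k + 1) (by omega) (by omega), sub_self]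
  exact ⟨m, by rw [window_add_two, hi, hi'], by rw [hmid, hj, hj']⟩

/-- If a right-infinite binary word `w` is unbalanced, then there is a subword
`w'` of `w` such that both `0w'0` and `1w'1` are subwords of `w`
(with `0 = false` and `1 = true`). -/
theorem exists_unbalanced_factor (w : ℕ → Bool) (h : ¬ BalancedWord w) :
    ∃ w' : List Bool, IsFactor w w' ∧
      IsFactor w (false :: (w' ++ [false])) ∧
      IsFactor w (true :: (w' ++ [true])) := by
  classical
  have hex := exists_height_window_add_two_le h
  obtain ⟨i, j, hij⟩ := Nat.find_spec hex
  have hmin :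
      ∀ n' < Nat.find hex, ∀ p q, height (window w p n') ≤ height (window w q n') + 1 :=
    fun n' hn' p q => by
      have := Nat.find_min hex hn'
      push Not at this
      exact Nat.le_of_lt_succ (this p q)
  obtain ⟨m, hi, hj⟩ := exists_window_eq_of_minimal hmin hij
  exact ⟨window w (i + 1) m, isFactor_window w _ _, hj ▸ isFactor_window w j _,
    hi ▸ isFactor_window w i _⟩
end

section
/- Let w be a right-infinite word over the binary alphabet {0,1}. If w is balanced, then p_w(n) ≤ n + 1 for all n > 0. -/
section Factors

variable {A : Type*} {w : ℕ → A}

theorem IsFactor.of_append {u v : List A} (h : IsFactor w (u ++ v)) :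
    IsFactor w u ∧ IsFactor w v := by
  obtain ⟨i, hi⟩ := h
  rw [List.length_append, List.range_add, List.map_append, List.map_map] at hi
  obtain ⟨hu, hv⟩ := List.append_inj hi (by simp)
  refine ⟨⟨i, hu⟩, ⟨i + u.length, ?_⟩⟩
  rw [hv]
  simp [Function.comp_def, add_assoc]

theorem IsFactor.of_cons {a : A} {u : List A} (h : IsFactor w (a :: u)) : IsFactor w u :=
  (IsFactor.of_append (u := [a]) h).2

theorem IsFactor.of_concat {a : A} {u : List A} (h : IsFactor w (u ++ [a])) : IsFactor w u :=
  h.of_append.1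

theorem isFactor_nil : IsFactor w [] := ⟨0, rfl⟩

theorem setOf_isFactor_finite [Finite A] (n : ℕ) : {u : List A | u.length = n ∧ IsFactor w u}.Finite :=
  (List.finite_length_eq A n).subset fun _ hu => hu.1

theorem icomplexity_zero : icomplexity w 0 = 1 := by
  have : {u : List A | u.length = 0 ∧ IsFactor w u} = {[]} := by
    ext u
    simp only [Set.mem_ofPred_eq, List.length_eq_zero_iff, Set.mem_singleton_iff,
      and_iff_left_iff_imp]
    rintro rfl
    exact isFactor_nil
  rw [icomplexity, this, Set.ncard_singleton]

end Factors

def IsRightSpecial (w : ℕ → Bool) (v : List Bool) : Prop :=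
  IsFactor w (v ++ [false]) ∧ IsFactor w (v ++ [true])

theorem IsRightSpecial.of_cons {w : ℕ → Bool} {a : Bool} {v : List Bool}
    (h : IsRightSpecial w (a :: v)) : IsRightSpecial w v :=
  ⟨h.1.of_cons, h.2.of_cons⟩

theorem isRightSpecial_of_isFactor_concat {w : ℕ → Bool} {v : List Bool} {a b : Bool}
    (ha : IsFactor w (v ++ [a])) (hb : IsFactor w (v ++ [b])) (hab : a ≠ b) :
    IsRightSpecial w v := by
  cases a <;> cases b <;> first | exact absurd rfl hab | exact ⟨ha, hb⟩ | exact ⟨hb, ha⟩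

theorem BalancedWord.not_isFactor_pair {w : ℕ → Bool} (hw : BalancedWord w) (s : List Bool) :
    ¬ (IsFactor w (true :: s ++ [true]) ∧ IsFactor w (false :: s ++ [false])) := by
  rintro ⟨h₁, h₀⟩
  have := hw _ _ h₁ h₀ (by simp)
  simp only [height, List.cons_append, List.count_cons, List.count_append] at this
  rw [abs_le] at this
  simp at this
  omega

theorem BalancedWord.eq_of_isRightSpecial {w : ℕ → Bool} (hw : BalancedWord w) :
    ∀ {u v : List Bool}, u.length = v.length → IsRightSpecial w u → IsRightSpecial w v → u = v
  | [], [], _, _, _ => rfl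
  | a :: u, b :: v, hlen, hu, hv => by
    obtain rfl : u = v := hw.eq_of_isRightSpecial (by simpa using hlen) hu.of_cons hv.of_cons
    cases a <;> cases b
    · rfl
    · exact absurd ⟨hv.2, hu.1⟩ (hw.not_isFactor_pair u)
    · exact absurd ⟨hu.2, hv.1⟩ (hw.not_isFactor_pair u)
    · rfl

theorem Set.ncard_le_ncard_add_one_of_injOn_sdiff {α β : Type*} {s : Set α} {t : Set β}
    (f : α → β) (x : α) (hf : ∀ a ∈ s, f a ∈ t) (hinj : Set.InjOn f (s \ {x}))
    (ht : t.Finite) : s.ncard ≤ t.ncard + 1 := by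
  calc s.ncard ≤ (s \ {x}).ncard + ({x} : Set α).ncard := Set.ncard_le_ncard_sdiff_add_ncard _ _
    _ ≤ t.ncard + 1 := by
      rw [Set.ncard_singleton]
      exact Nat.add_le_add_right
        (Set.ncard_le_ncard_of_injOn f (fun a ha => hf a ha.1) hinj ht) 1

theorem List.exists_eq_append_singleton_of_length_eq_succ {α : Type*} {u : List α} {n : ℕ}
    (h : u.length = n + 1) : ∃ v b, u = v ++ [b] ∧ v.length = n := by
  obtain rfl | ⟨v, b, rfl⟩ := u.eq_nil_or_concat
  · simp at h
  · exact ⟨v, b, List.concat_eq_append .., by simpa using h⟩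

theorem icomplexity_succ_le {w : ℕ → Bool} {n : ℕ}
    (hrs : {v : List Bool | v.length = n ∧ IsRightSpecial w v}.Subsingleton) :
    icomplexity w (n + 1) ≤ icomplexity w n + 1 := by
  obtain ⟨x, hx⟩ : ∃ x : List Bool, ∀ r, r.length = n → IsRightSpecial w r → r ++ [true] = x := by
    by_cases h : ∃ r, r.length = n ∧ IsRightSpecial w r
    · obtain ⟨r, hr⟩ := h
      exact ⟨r ++ [true], fun r' hr'len hr' => by rw [hrs ⟨hr'len, hr'⟩ hr]⟩
    · exact ⟨[], fun r hrlen hr => absurd ⟨r, hrlen, hr⟩ h⟩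
  refine Set.ncard_le_ncard_add_one_of_injOn_sdiff List.dropLast x ?_ ?_ (setOf_isFactor_finite n)
  · rintro u ⟨hlen, hu⟩
    obtain ⟨v, b, rfl, rfl⟩ := List.exists_eq_append_singleton_of_length_eq_succ hlen
    simpa using hu.of_concat
  · rintro u₁ ⟨⟨hlen₁, hu₁⟩, hx₁⟩ u₂ ⟨⟨hlen₂, hu₂⟩, hx₂⟩ hdrop
    obtain ⟨v, b₁, rfl, hv⟩ := List.exists_eq_append_singleton_of_length_eq_succ hlen₁
    obtain ⟨v₂, b₂, rfl, -⟩ := List.exists_eq_append_singleton_of_length_eq_succ hlen₂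
    obtain rfl : v = v₂ := by simpa using hdrop
    by_contra hne
    have hb : b₁ ≠ b₂ := fun h => hne (by rw [h])
    have := hx v hv (isRightSpecial_of_isFactor_concat hu₁ hu₂ hb)
    cases b₁ <;> cases b₂ <;> simp_all

theorem icomplexity_le_of_balanced_general (w : ℕ → Bool) (h : BalancedWord w)
    (n : ℕ) : icomplexity w n ≤ n + 1 := by
  induction n with
  | zero => exact icomplexity_zero.le
  | succ m ih =>
    have hrs : {v : List Bool | v.length = m ∧ IsRightSpecial w v}.Subsingleton :=
      fun u hu v hv => h.eq_of_isRightSpecial (hu.1.trans hv.1.symm) hu.2 hv.2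
    calc icomplexity w (m + 1) ≤ icomplexity w m + 1 := icomplexity_succ_le hrs
      _ ≤ m + 1 + 1 := by omega

/-- If a right-infinite binary word `w` is balanced, then `p_w(n) ≤ n + 1`
for all `n > 0`. -/
theorem icomplexity_le_of_balanced (w : ℕ → Bool) (h : BalancedWord w)
    (n : ℕ) (hn : 0 < n) : icomplexity w n ≤ n + 1 :=
  icomplexity_le_of_balanced_general w h n
end

section
/- For every N ≥ 1, there exists a binary word w of length N such that p_w(n) = n + 1 for all 1 ≤ n ≤ ⌊N/2⌋, and p_w(n) = N − n + 1 for all ⌈N/2⌉ ≤ n ≤ N. -/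
theorem setOf_infix_length_eq_image {α : Type*} (w : List α) {n : ℕ} (hn : n ≤ w.length) :
    {u | u.length = n ∧ u <:+: w} = (fun i => (w.drop i).take n) '' Set.Iic (w.length - n) := by
  ext u
  simp only [Set.mem_image, Set.mem_Iic]
  constructor
  · rintro ⟨rfl, s, t, rfl⟩
    exact ⟨s.length, by simp; omega, by simp⟩
  · rintro ⟨i, hi, rfl⟩
    exact ⟨by simp; omega, (List.take_prefix _ _).isInfix.trans (List.drop_suffix _ _).isInfix⟩

/-- A single `true` at position `j`, or no `true` at all when `n ≤ j`. -/
def pulse (n j : ℕ) : List Bool := (List.range n).map (· == j)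

@[simp] theorem length_pulse (n j : ℕ) : (pulse n j).length = n := by simp [pulse]

theorem pulse_of_length_le {n j : ℕ} (h : n ≤ j) : pulse n j = pulse n n := by
  refine List.ext_getElem (by simp) fun k hk _ => ?_
  simp only [length_pulse] at hk
  simp [pulse]
  omega

theorem pulse_injOn (n : ℕ) : Set.InjOn (pulse n) (Set.Iic n) := by
  suffices ∀ j j', j < j' → j' ≤ n → pulse n j ≠ pulse n j' by
    intro j hj j' hj' h
    by_contra hne
    rcases Nat.lt_or_gt_of_ne hne with hlt | hlt
    · exact this j j' hlt hj' h
    · exact this j' j hlt hj h.symm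
  intro j j' hlt hj' h
  have := congrArg (·[j]?) h
  simp [pulse, List.getElem?_range (show j < n by omega)] at this
  omega

theorem take_drop_pulse {N a i n : ℕ} (h : i + n ≤ N) :
    ((pulse N a).drop i).take n = if i ≤ a then pulse n (a - i) else pulse n n := by
  refine List.ext_getElem (by split_ifs <;> simp <;> omega) fun k hk _ => ?_
  simp only [List.length_take, List.length_drop, length_pulse] at hk
  split_ifs <;> simp [pulse] <;> omega

theorem complexity_pulse_of_le {N a n : ℕ} (hna : n ≤ a) (hN : a + n ≤ N) :
    complexity (pulse N a) n = n + 1 := by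
  have windows : (fun i => ((pulse N a).drop i).take n) '' Set.Iic (N - n) =
      pulse n '' Set.Iic n := by
    apply Set.Subset.antisymm
    · rintro _ ⟨i, hi, rfl⟩
      simp only [Set.mem_Iic] at hi
      dsimp only
      rw [take_drop_pulse (by omega)]
      split_ifs
      · rcases le_or_gt (a - i) n with h | h
        · exact ⟨a - i, h, rfl⟩
        · exact ⟨n, Set.mem_Iic.2 le_rfl, (pulse_of_length_le h.le).symm⟩
      · exact ⟨n, Set.mem_Iic.2 le_rfl, rfl⟩
    · rintro _ ⟨j, hj, rfl⟩
      simp only [Set.mem_Iic] at hj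
      rcases hj.lt_or_eq with hj | rfl
      · refine ⟨a - j, by simp; omega, ?_⟩
        dsimp only
        rw [take_drop_pulse (by omega), if_pos (Nat.sub_le a j)]
        congr 1
        omega
      · refine ⟨0, by simp, ?_⟩
        dsimp only
        rw [take_drop_pulse (by omega), if_pos (Nat.zero_le a), Nat.sub_zero,
          pulse_of_length_le hna]
  rw [complexity, setOf_infix_length_eq_image _ (by simp; omega), length_pulse, windows,
    (pulse_injOn n).ncard_image, Set.ncard_Iic_nat]

theorem complexity_pulse_of_lt {N a n : ℕ} (han : a < n) (hnN : n ≤ N) (hN : N ≤ a + n) :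
    complexity (pulse N a) n = N - n + 1 := by
  have windows : (fun i => ((pulse N a).drop i).take n) '' Set.Iic (N - n) =
      (fun i => pulse n (a - i)) '' Set.Iic (N - n) := by
    refine Set.image_congr fun i hi => ?_
    simp only [Set.mem_Iic] at hi
    rw [take_drop_pulse (by omega), if_pos (by omega)]
  have injOn : Set.InjOn (fun i => pulse n (a - i)) (Set.Iic (N - n)) := by
    intro i hi i' hi' h
    simp only [Set.mem_Iic] at hi hi'
    have := pulse_injOn n (by simp; omega) (by simp; omega) h
    omega
  rw [complexity, setOf_infix_length_eq_image _ (by simpa), length_pulse, windows,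
    injOn.ncard_image, Set.ncard_Iic_nat]

theorem exists_peak_word_general (N : ℕ) :
    ∃ w : List Bool, w.length = N ∧
      (∀ n, 1 ≤ n → n ≤ N / 2 → complexity w n = n + 1) ∧
      (∀ n, (N + 1) / 2 ≤ n → n ≤ N → complexity w n = N - n + 1) := by
  refine ⟨pulse N (N / 2), length_pulse N _, fun n _ hn => complexity_pulse_of_le hn (by omega),
    fun n hn hnN => ?_⟩
  rcases le_or_gt n (N / 2) with hle | hlt
  · rw [complexity_pulse_of_le hle (by omega)]
    omega
  · exact complexity_pulse_of_lt hlt hnN (by omega)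

/-- For every `N ≥ 1` there is a binary word `w` of length `N` with
`p_w(n) = n + 1` for `1 ≤ n ≤ ⌊N/2⌋` and `p_w(n) = N - n + 1` for
`⌈N/2⌉ ≤ n ≤ N`. -/
theorem exists_peak_word (N : ℕ) (hN : 1 ≤ N) :
    ∃ w : List Bool, w.length = N ∧
      (∀ n, 1 ≤ n → n ≤ N / 2 → complexity w n = n + 1) ∧
      (∀ n, (N + 1) / 2 ≤ n → n ≤ N → complexity w n = N - n + 1) :=
  exists_peak_word_general N
end
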